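/- arXiv:1411.2807 — 9 statements merged into one kernel-verified Lean document; each statement's English description precedes it below -/
import Mathlib

section
/- Let S ≥ 1 and let H : [0,∞) → M_S(ℝ) be continuous with H(t) essentially nonnegative (all off-diagonal entries nonnegative) for every t ≥ 0. Let x : [0,∞) → ℝ^S be differentiable with x'(t) = H(t)x(t) for all t ≥ 0. If x(0) ≥ 0 componentwise, then x(t) ≥ 0 componentwise for all t ≥ 0. -/
/-!
Fix `T ≥ 0`, a bound `C` on the absolute row sums of `H` over `[0, T]`, and `ε > 0`. The
perturbed curve `y(t) = x(t) + ε e^{(C+1)t} 𝟙` starts in the nonnegative orthant and points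
strictly into it wherever a component vanishes: if `y ≥ 0` and `yᵢ(t) = 0`, then `xᵢ(t)` is the
smallest coordinate of `x(t)`, so essential nonnegativity gives `(H x)ᵢ ≥ -C ε e^{(C+1)t}` and
`yᵢ' ≥ ε e^{(C+1)t} > 0`. Real induction keeps `y` in the orthant on `[0, T]`; let `ε → 0`.
-/

open Set Filter Topology

theorem HasDerivWithinAt.eventually_nhdsGT_lt {f : ℝ → ℝ} {d x : ℝ}
    (hf : HasDerivWithinAt f d (Ici x) x) (hd : 0 < d) : ∀ᶠ z in 𝓝[>] x, f x < f z := by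
  have hslope : Tendsto (slope f x) (𝓝[>] x) (𝓝 d) :=
    (hasDerivWithinAt_iff_tendsto_slope' (lt_irrefl x)).1 hf.Ioi_of_Ici
  filter_upwards [hslope.eventually_const_lt hd, self_mem_nhdsWithin] with z hz hxz
  rw [slope_def_field] at hz
  exact sub_pos.1 ((div_pos_iff_of_pos_right (sub_pos.2 hxz)).1 hz)

theorem forall_nonneg_on_Icc_of_hasDerivWithinAt_pos {ι : Type*} [Finite ι]
    {y : ι → ℝ → ℝ} {a b : ℝ} (hcont : ∀ i, ContinuousOn (y i) (Icc a b)) (ha : ∀ i, 0 ≤ y i a)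
    (hboundary : ∀ t ∈ Ico a b, ∀ i, (∀ j, 0 ≤ y j t) → y i t = 0 →
      ∃ d > 0, HasDerivWithinAt (y i) d (Ici t) t) :
    ∀ t ∈ Icc a b, ∀ i, 0 ≤ y i t := by
  set s : Set ℝ := {t | ∀ i, 0 ≤ y i t}
  have hclosed : IsClosed (s ∩ Icc a b) := by
    rw [inter_comm]
    exact (continuousOn_pi.2 hcont).preimage_isClosed_of_isClosed isClosed_Icc
      (isClosed_Ici (a := (0 : ι → ℝ)))
  refine fun t ht => hclosed.Icc_subset_of_forall_mem_nhdsWithin ha ?_ ht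
  rintro t ⟨hs, htIco⟩
  refine Filter.eventually_all.2 fun i => ?_
  rcases (hs i).eq_or_lt with hzero | hpos
  · obtain ⟨d, hd, hderiv⟩ := hboundary t htIco i hs hzero.symm
    filter_upwards [hderiv.eventually_nhdsGT_lt hd] with z hz
    exact hzero ▸ hz.le
  · have hcontGT : ContinuousWithinAt (y i) (Ioi t) t :=
      (hcont i t (Ico_subset_Icc_self htIco)).mono_of_mem_nhdsWithin (Icc_mem_nhdsGT_of_mem htIco)
    filter_upwards [hcontGT.eventually_const_lt hpos] with z hz
    exact hz.le

def Matrix.IsEssentiallyNonneg {ι : Type*} (A : Matrix ι ι ℝ) : Prop :=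
  Pairwise fun i j => 0 ≤ A i j

theorem Matrix.IsEssentiallyNonneg.neg_sum_abs_mul_le_mulVec {ι : Type*} [Fintype ι]
    {A : Matrix ι ι ℝ} (hA : A.IsEssentiallyNonneg) {v : ι → ℝ} {m : ℝ} (hm : 0 ≤ m)
    (hv : ∀ j, -m ≤ v j) {i : ι} (hi : v i = -m) :
    -((∑ j, |A i j|) * m) ≤ A.mulVec v i := by
  rw [Finset.sum_mul, ← Finset.sum_neg_distrib]
  refine Finset.sum_le_sum fun j _ => ?_
  change -(|A i j| * m) ≤ A i j * v j
  rcases eq_or_ne i j with rfl | hij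
  · rw [hi]
    linarith [mul_le_mul_of_nonneg_right (le_abs_self (A i i)) hm]
  · rw [abs_of_nonneg (hA hij)]
    linarith [mul_le_mul_of_nonneg_left (hv j) (hA hij)]

theorem exists_forall_sum_abs_le_of_continuousOn {ι : Type*} [Fintype ι]
    {M : ℝ → Matrix ι ι ℝ} {K : Set ℝ} (hK : IsCompact K)
    (hM : ∀ i j, ContinuousOn (fun t => M t i j) K) :
    ∃ C, ∀ t ∈ K, ∀ i, ∑ j, |M t i j| ≤ C := by
  obtain ⟨C, hC⟩ := hK.bddAbove_image (f := fun t => ∑ i, ∑ j, |M t i j|)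
    (continuousOn_finsetSum _ fun i _ => continuousOn_finsetSum _ fun j _ => (hM i j).abs)
  refine ⟨C, fun t ht i => le_trans ?_ (hC ⟨t, ht, rfl⟩)⟩
  exact Finset.single_le_sum (f := fun i => ∑ j, |M t i j|)
    (fun i _ => Finset.sum_nonneg fun j _ => abs_nonneg _) (Finset.mem_univ i)

theorem add_exp_nonneg_of_hasDerivWithinAt_mulVec {ι : Type*} [Fintype ι]
    {H : ℝ → Matrix ι ι ℝ} {x : ℝ → ι → ℝ} {T C ε : ℝ}
    (hH : ∀ t ∈ Icc 0 T, (H t).IsEssentiallyNonneg)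
    (hC : ∀ t ∈ Icc 0 T, ∀ i, ∑ j, |H t i j| ≤ C)
    (hx : ∀ t ∈ Ici (0 : ℝ), ∀ i,
      HasDerivWithinAt (fun s => x s i) ((H t).mulVec (x t) i) (Ici 0) t)
    (hx0 : ∀ i, 0 ≤ x 0 i) (hε : 0 < ε) :
    ∀ t ∈ Icc 0 T, ∀ i, 0 ≤ x t i + ε * Real.exp ((C + 1) * t) := by
  refine forall_nonneg_on_Icc_of_hasDerivWithinAt_pos
    (y := fun i t => x t i + ε * Real.exp ((C + 1) * t)) (fun i => ?_) (fun i => ?_) ?_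
  · exact (ContinuousOn.mono (fun t ht => (hx t ht i).continuousWithinAt) Icc_subset_Ici_self).add
      (by fun_prop)
  · simpa using add_nonneg (hx0 i) hε.le
  rintro t ⟨ht0, htT⟩ i hnonneg hzero
  set m := ε * Real.exp ((C + 1) * t)
  have hm : 0 < m := by positivity
  have hexp : HasDerivAt (fun s => ε * Real.exp ((C + 1) * s)) (m * (C + 1)) t := by
    simpa [m, mul_assoc] using ((hasDerivAt_id t).const_mul (C + 1)).exp.const_mul ε
  refine ⟨_, ?_, ((hx t ht0 i).mono (Ici_subset_Ici.2 ht0)).add hexp.hasDerivWithinAt⟩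
  have hrow := (hH t ⟨ht0, htT.le⟩).neg_sum_abs_mul_le_mulVec hm.le (v := x t) (i := i)
    (fun j => by linarith [hnonneg j]) (by linarith)
  linarith [mul_le_mul_of_nonneg_right (hC t ⟨ht0, htT.le⟩ i) hm.le]

theorem nonneg_preserved_of_essentially_nonneg_general
    (S : ℕ)
    (H : ℝ → Matrix (Fin S) (Fin S) ℝ)
    (hHcont : ∀ i j, ContinuousOn (fun t => H t i j) (Ici (0 : ℝ)))
    (hHess : ∀ t ∈ Ici (0 : ℝ), ∀ i j, i ≠ j → 0 ≤ H t i j)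
    (x : ℝ → Fin S → ℝ)
    (hx : ∀ t ∈ Ici (0 : ℝ), ∀ i,
      HasDerivWithinAt (fun s => x s i) ((H t).mulVec (x t) i) (Ici 0) t)
    (hx0 : ∀ i, 0 ≤ x 0 i) :
    ∀ t ∈ Ici (0 : ℝ), ∀ i, 0 ≤ x t i := by
  intro T hT i
  obtain ⟨C, hC⟩ := exists_forall_sum_abs_le_of_continuousOn isCompact_Icc
    fun i j => (hHcont i j).mono (Icc_subset_Ici_self : Icc 0 T ⊆ Ici 0)
  refine le_of_forall_pos_le_add fun δ hδ => ?_
  have hexp := Real.exp_pos ((C + 1) * T)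
  have := add_exp_nonneg_of_hasDerivWithinAt_mulVec (fun t ht i j => hHess t ht.1 i j)
    hC hx hx0 (div_pos hδ hexp) T ⟨hT, le_rfl⟩ i
  rwa [div_mul_cancel₀ δ hexp.ne'] at this

/-- If `H(t)` is continuous and essentially nonnegative (off-diagonal entries
nonnegative) for every `t ≥ 0`, and `x' = H(t) x` on `[0,∞)` with `x(0) ≥ 0`
componentwise, then `x(t) ≥ 0` componentwise for all `t ≥ 0`. -/
theorem nonneg_preserved_of_essentially_nonneg
    (S : ℕ) (hS : 1 ≤ S)
    (H : ℝ → Matrix (Fin S) (Fin S) ℝ)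
    (hHcont : ∀ i j, ContinuousOn (fun t => H t i j) (Ici (0 : ℝ)))
    (hHess : ∀ t ∈ Ici (0 : ℝ), ∀ i j, i ≠ j → 0 ≤ H t i j)
    (x : ℝ → Fin S → ℝ)
    (hx : ∀ t ∈ Ici (0 : ℝ), ∀ i,
      HasDerivWithinAt (fun s => x s i) ((H t).mulVec (x t) i) (Ici 0) t)
    (hx0 : ∀ i, 0 ≤ x 0 i) :
    ∀ t ∈ Ici (0 : ℝ), ∀ i, 0 ≤ x t i :=
  nonneg_preserved_of_essentially_nonneg_general S H hHcont hHess x hx hx0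
end

section
/- Let S ≥ 1 and let H : [0,∞) → M_S(ℝ) be continuous with H(t) essentially nonnegative for every t ≥ 0, and let h^*(t) = max_{1≤j≤S} ∑_{i=1}^S H(t)_{ij} be the largest column sum of H(t). Let x : [0,∞) → ℝ^S be differentiable with x'(t) = H(t)x(t) for all t ≥ 0 and x(0) ≥ 0 componentwise. Then ‖x(t)‖₁ ≤ exp(∫₀ᵗ h^*(τ) dτ) · ‖x(0)‖₁ for all t ≥ 0. -/
/-!
Away from its zeros, `|x_i|` has derivative `sign(x_i) (H x)_i`, and at a zero it still has the
right derivative `|(H x)_i|`. Since the off-diagonal entries of `H` are nonnegative, either value is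
at most `∑_j H_ij |x_j|`; summing over `i` bounds the right derivative of `‖x‖₁` by
`∑_j (∑_i H_ij) |x_j| ≤ h* ‖x‖₁`. Hence `exp (-∫₀ᵗ h*) ‖x(t)‖₁` has nonpositive right
derivative, so it is nonincreasing.
-/

open Set Filter Topology Finset Real

noncomputable def rightDerivAbs (a v : ℝ) : ℝ :=
  if a = 0 then |v| else SignType.sign a * v

theorem HasDerivWithinAt.abs_Ici {u : ℝ → ℝ} {v t : ℝ} (hu : HasDerivWithinAt u v (Ici t) t) :
    HasDerivWithinAt (fun s => |u s|) (rightDerivAbs (u t) v) (Ici t) t := by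
  unfold rightDerivAbs
  split_ifs with h
  · rw [← hasDerivWithinAt_Ioi_iff_Ici,
      hasDerivWithinAt_iff_tendsto_slope' Set.self_notMem_Ioi] at hu ⊢
    refine hu.abs.congr' ?_
    filter_upwards [self_mem_nhdsWithin] with z (hz : t < z)
    simp only [slope_def_field, h, abs_zero, sub_zero, abs_div, abs_of_pos (sub_pos.2 hz)]
  · exact (hasDerivAt_abs h).comp_hasDerivWithinAt t hu

theorem rightDerivAbs_mul_add_le (a c w : ℝ) : rightDerivAbs a (c * a + w) ≤ c * |a| + |w| := by
  rcases lt_trichotomy a 0 with h | rfl | h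
  · simp only [rightDerivAbs, h.ne, if_false, sign_neg h, SignType.coe_neg_one, abs_of_neg h]
    linarith [neg_abs_le w]
  · simp [rightDerivAbs]
  · simp only [rightDerivAbs, h.ne', if_false, sign_pos h, SignType.coe_one, abs_of_pos h]
    linarith [le_abs_self w]

theorem ContinuousOn.ciSup_fintype {α ι L : Type*} [TopologicalSpace α] [Fintype ι] [Nonempty ι]
    [ConditionallyCompleteLattice L] [TopologicalSpace L] [ContinuousSup L] {f : ι → α → L}
    {s : Set α} (hf : ∀ i, ContinuousOn (f i) s) : ContinuousOn (fun x => ⨆ i, f i x) s := by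
  simpa only [← Finset.sup'_univ_eq_ciSup] using
    ContinuousOn.finset_sup'_apply univ_nonempty fun i _ => hf i

theorem hasDerivWithinAt_integral_Ici_of_continuousOn {k : ℝ → ℝ} {a b x : ℝ}
    (hk : ContinuousOn k (Icc a b)) (hx : x ∈ Ico a b) :
    HasDerivWithinAt (fun u => ∫ τ in a..u, k τ) (k x) (Ici x) x := by
  have hmem : Icc a b ∈ 𝓝[>] x := Icc_mem_nhdsGT_of_mem hx
  exact intervalIntegral.integral_hasDerivWithinAt_right
    ((hk.mono (Icc_subset_Icc_right hx.2.le)).intervalIntegrable_of_Icc hx.1)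
    ⟨Icc a b, hmem, hk.aestronglyMeasurable measurableSet_Icc⟩
    ((hk x (Ico_subset_Icc_self hx)).mono_of_mem_nhdsWithin hmem)

theorem le_exp_integral_mul_of_hasDerivWithinAt_Ici_le {f f' k : ℝ → ℝ} {a b : ℝ}
    (hf : ContinuousOn f (Icc a b)) (hf' : ∀ x ∈ Ico a b, HasDerivWithinAt f (f' x) (Ici x) x)
    (hk : ContinuousOn k (Icc a b)) (bound : ∀ x ∈ Ico a b, f' x ≤ k x * f x) :
    ∀ x ∈ Icc a b, f x ≤ exp (∫ τ in a..x, k τ) * f a := by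
  intro x hx
  set I : ℝ → ℝ := fun u => ∫ τ in a..u, k τ
  have hI : ContinuousOn I (Icc a b) := by
    have hab : a ≤ b := hx.1.trans hx.2
    simpa only [uIcc_of_le hab] using
      intervalIntegral.continuousOn_primitive_interval' (hk.intervalIntegrable_of_Icc hab)
        left_mem_uIcc
  have hdecay : exp (-I x) * f x ≤ exp (-I a) * f a :=
    image_le_of_deriv_right_le_deriv_boundary
      (f := fun y => exp (-I y) * f y) (B := fun _ => exp (-I a) * f a)
      (f' := fun y => exp (-I y) * -k y * f y + exp (-I y) * f' y) (B' := fun _ => 0)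
      (hI.neg.rexp.mul hf)
      (fun y hy => (hasDerivWithinAt_integral_Ici_of_continuousOn hk hy).neg.exp.mul (hf' y hy))
      le_rfl continuousOn_const (fun y _ => hasDerivWithinAt_const _ _ _)
      (fun y hy => by nlinarith [bound y hy, exp_pos (-I y)]) hx
  calc f x = exp (I x) * (exp (-I x) * f x) := by rw [← mul_assoc, ← exp_add]; simp
    _ ≤ exp (I x) * (exp (-I a) * f a) := mul_le_mul_of_nonneg_left hdecay (exp_pos _).le
    _ = exp (I x) * f a := by simp [I]

namespace Matrix

variable {ι : Type*} [Fintype ι] (A : Matrix ι ι ℝ) (y : ι → ℝ)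

theorem mulVec_apply_eq_diag_add [DecidableEq ι] (i : ι) :
    (A *ᵥ y) i = A i i * y i + ∑ j ∈ univ.erase i, A i j * y j := by
  rw [mulVec, dotProduct, ← Finset.add_sum_erase _ _ (mem_univ i)]

theorem rightDerivAbs_mulVec_le {i : ι} (hA : ∀ j, i ≠ j → 0 ≤ A i j) :
    rightDerivAbs (y i) ((A *ᵥ y) i) ≤ (A *ᵥ fun j => |y j|) i := by
  classical
  rw [mulVec_apply_eq_diag_add, mulVec_apply_eq_diag_add]
  refine (rightDerivAbs_mul_add_le _ _ _).trans ((add_le_add_iff_left _).2 ?_)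
  refine (abs_sum_le_sum_abs _ _).trans (sum_le_sum fun j hj => ?_)
  rw [abs_mul, abs_of_nonneg (hA j (ne_of_mem_erase hj).symm)]

theorem sum_mulVec_eq_sum_colSum_mul : ∑ i, (A *ᵥ y) i = ∑ j, (∑ i, A i j) * y j := by
  simp only [mulVec, dotProduct, sum_mul]
  exact sum_comm

theorem sum_mulVec_le_ciSup_colSum_mul (hy : 0 ≤ y) :
    ∑ i, (A *ᵥ y) i ≤ (⨆ j, ∑ i, A i j) * ∑ j, y j := by
  rw [sum_mulVec_eq_sum_colSum_mul, mul_sum]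
  exact sum_le_sum fun j _ => mul_le_mul_of_nonneg_right
    (le_ciSup (f := fun j => ∑ i, A i j) (Set.finite_range _).bddAbove j) (hy j)

theorem sum_rightDerivAbs_mulVec_le (hA : ∀ i j, i ≠ j → 0 ≤ A i j) :
    ∑ i, rightDerivAbs (y i) ((A *ᵥ y) i) ≤ (⨆ j, ∑ i, A i j) * ∑ j, |y j| :=
  (sum_le_sum fun i _ => A.rightDerivAbs_mulVec_le y (hA i)).trans
    (A.sum_mulVec_le_ciSup_colSum_mul _ fun j => abs_nonneg (y j))

end Matrix

theorem l1_upper_bound_of_nonneg_init_general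
    (S : ℕ) (hS : 1 ≤ S)
    (H : ℝ → Matrix (Fin S) (Fin S) ℝ)
    (hHcont : ∀ i j, ContinuousOn (fun t => H t i j) (Ici (0 : ℝ)))
    (hHess : ∀ t ∈ Ici (0 : ℝ), ∀ i j, i ≠ j → 0 ≤ H t i j)
    (hstar : ℝ → ℝ)
    (hhstar : ∀ t, hstar t = ⨆ j, ∑ i, H t i j)
    (x : ℝ → Fin S → ℝ)
    (hx : ∀ t ∈ Ici (0 : ℝ), ∀ i,
      HasDerivWithinAt (fun s => x s i) ((H t).mulVec (x t) i) (Ici 0) t) :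
    ∀ t ∈ Ici (0 : ℝ),
      ∑ i, |x t i| ≤ Real.exp (∫ τ in (0 : ℝ)..t, hstar τ) * ∑ i, |x 0 i| := by
  have : Nonempty (Fin S) := ⟨⟨0, hS⟩⟩
  have hxc (i : Fin S) : ContinuousOn (fun s => x s i) (Ici 0) :=
    fun s hs => (hx s hs i).continuousWithinAt
  have hstar_cont : ContinuousOn hstar (Ici 0) := by
    rw [funext hhstar]
    exact ContinuousOn.ciSup_fintype fun j => continuousOn_finsetSum _ fun i _ => hHcont i j
  intro t ht
  refine le_exp_integral_mul_of_hasDerivWithinAt_Ici_le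
    (f' := fun s => ∑ i, rightDerivAbs (x s i) ((H s).mulVec (x s) i))
    (continuousOn_finsetSum _ fun i _ => ((hxc i).abs).mono Icc_subset_Ici_self)
    (fun s hs => HasDerivWithinAt.fun_sum fun i _ =>
      ((hx s hs.1 i).mono (Ici_subset_Ici.2 hs.1)).abs_Ici)
    (hstar_cont.mono Icc_subset_Ici_self)
    (fun s hs => hhstar s ▸ (H s).sum_rightDerivAbs_mulVec_le (x s) (hHess s hs.1))
    t ⟨ht, le_rfl⟩

/-- Upper bound `‖x(t)‖₁ ≤ exp(∫₀ᵗ h*(τ) dτ) ‖x(0)‖₁` for solutions of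
`x' = H(t)x` with essentially nonnegative `H(t)` and nonnegative initial
condition, where `h*(t)` is the largest column sum of `H(t)`. -/
theorem l1_upper_bound_of_nonneg_init
    (S : ℕ) (hS : 1 ≤ S)
    (H : ℝ → Matrix (Fin S) (Fin S) ℝ)
    (hHcont : ∀ i j, ContinuousOn (fun t => H t i j) (Ici (0 : ℝ)))
    (hHess : ∀ t ∈ Ici (0 : ℝ), ∀ i j, i ≠ j → 0 ≤ H t i j)
    (hstar : ℝ → ℝ)
    (hhstar : ∀ t, hstar t = ⨆ j, ∑ i, H t i j)
    (x : ℝ → Fin S → ℝ)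
    (hx : ∀ t ∈ Ici (0 : ℝ), ∀ i,
      HasDerivWithinAt (fun s => x s i) ((H t).mulVec (x t) i) (Ici 0) t)
    (hx0 : ∀ i, 0 ≤ x 0 i) :
    ∀ t ∈ Ici (0 : ℝ),
      ∑ i, |x t i| ≤ Real.exp (∫ τ in (0 : ℝ)..t, hstar τ) * ∑ i, |x 0 i| :=
  l1_upper_bound_of_nonneg_init_general S hS H hHcont hHess hstar hhstar x hx
end

section
/- Let S ≥ 1 and let H : [0,∞) → M_S(ℝ) be continuous with H(t) essentially nonnegative for every t ≥ 0, and let h_*(t) = min_{1≤j≤S} ∑_{i=1}^S H(t)_{ij} be the smallest column sum of H(t). Let x : [0,∞) → ℝ^S be differentiable with x'(t) = H(t)x(t) for all t ≥ 0 and x(0) ≥ 0 componentwise. Then ‖x(t)‖₁ ≥ exp(∫₀ᵗ h_*(τ) dτ) · ‖x(0)‖₁ for all t ≥ 0. -/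
/-!
The heart of the matter is that the nonnegative orthant is invariant. Put
`φ(t) = ∑ᵢ min(xᵢ(t), 0)²`, a C¹ function with `φ' = 2 ∑ᵢ min(xᵢ, 0) (H x)ᵢ`. Splitting
`xⱼ = max(xⱼ, 0) + min(xⱼ, 0)`, the cross terms `min(xᵢ, 0) Hᵢⱼ max(xⱼ, 0)` with `i ≠ j` are
`≤ 0` by essential nonnegativity, and the diagonal ones vanish, so on `[0, T]` we get
`φ' ≤ K φ` with `K` controlled by a bound on the entries of `H`. Grönwall and `φ(0) = 0` give
`φ ≡ 0`, i.e. `x ≥ 0`.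

Then `‖x‖₁ = ∑ᵢ xᵢ` has derivative `∑ⱼ (∑ᵢ Hᵢⱼ) xⱼ ≥ h_* ‖x‖₁`, so
`exp(-∫₀ᵗ h_*) ‖x(t)‖₁` is nondecreasing.
-/

open Set Matrix

lemma hasDerivAt_min_zero_sq (s : ℝ) : HasDerivAt (fun y => min y 0 ^ 2) (2 * min s 0) s := by
  rcases lt_trichotomy s 0 with hs | rfl | hs
  · rw [min_eq_left hs.le]
    refine (hasDerivAt_pow 2 s).congr_deriv (by ring) |>.congr_of_eventuallyEq ?_
    filter_upwards [Iio_mem_nhds hs] with y hy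
    rw [min_eq_left hy.le]
  · have hsq : HasDerivWithinAt (fun y : ℝ => y ^ 2) 0 (Iic 0) 0 := by
      simpa using (hasDerivAt_pow 2 (0 : ℝ)).hasDerivWithinAt
    have hleft : HasDerivWithinAt (fun y : ℝ => min y 0 ^ 2) 0 (Iic 0) 0 :=
      hsq.congr (fun y hy => by rw [min_eq_left hy]) (by simp)
    have hright : HasDerivWithinAt (fun y : ℝ => min y 0 ^ 2) 0 (Ici 0) 0 :=
      (hasDerivWithinAt_const _ _ (0 : ℝ)).congr
        (fun y hy => by rw [min_eq_right (mem_Ici.1 hy)]; simp) (by simp)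
    simpa [Iic_union_Ici] using hleft.union hright
  · rw [min_eq_right hs.le, mul_zero]
    refine (hasDerivAt_const s (0 : ℝ)).congr_of_eventuallyEq ?_
    filter_upwards [Ioi_mem_nhds hs] with y hy
    rw [min_eq_right hy.le]; simp

lemma le_zero_of_hasDerivWithinAt_le_mul {f f' : ℝ → ℝ} {K a b : ℝ}
    (hf : ContinuousOn f (Icc a b)) (hf' : ∀ x ∈ Ico a b, HasDerivWithinAt f (f' x) (Ici x) x)
    (ha : f a ≤ 0) (bound : ∀ x ∈ Ico a b, f' x ≤ K * f x) : ∀ x ∈ Icc a b, f x ≤ 0 := by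
  intro x hx
  simpa [gronwallBound_ε0_δ0] using le_gronwallBound_of_liminf_deriv_right_le hf
    (fun x hx _ hr => (hf' x hx).liminf_right_slope_le hr) (K := K) (ε := 0) ha
    (by simpa using bound) x hx

lemma ContinuousOn.ciInf_fintype {α β ι : Type*} [TopologicalSpace α]
    [ConditionallyCompleteLinearOrder β] [TopologicalSpace β] [OrderTopology β] [Fintype ι]
    {f : ι → α → β} {s : Set α} (hf : ∀ i, ContinuousOn (f i) s) :
    ContinuousOn (fun a => ⨅ i, f i a) s := by
  cases isEmpty_or_nonempty ι
  · simpa only [iInf_of_isEmpty] using continuousOn_const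
  · simp only [← Finset.inf'_univ_eq_ciInf]
    exact ContinuousOn.finset_inf'_apply _ fun i _ => hf i

lemma hasDerivWithinAt_integral_Ici {h : ℝ → ℝ} {a s : ℝ} (hh : ContinuousOn h (Ici a))
    (hs : a ≤ s) : HasDerivWithinAt (fun t => ∫ τ in a..t, h τ) (h s) (Ici s) s := by
  have hsub : Ioi s ⊆ Ici a := fun t ht => hs.trans ht.le
  refine intervalIntegral.integral_hasDerivWithinAt_right (t := Ioi s) ?_ ?_ ?_
  · exact (hh.mono (by simpa [uIcc_of_le hs] using Icc_subset_Ici_self)).intervalIntegrable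
  · exact ((hh.stronglyMeasurableAtFilter_nhdsWithin measurableSet_Ici s).filter_mono
      (nhdsWithin_mono _ hsub))
  · exact (hh s hs).mono hsub

theorem exp_integral_mul_le_of_mul_le_deriv {N N' h : ℝ → ℝ} {a t : ℝ}
    (hh : ContinuousOn h (Ici a)) (hN : ∀ s ∈ Ici a, HasDerivWithinAt N (N' s) (Ici a) s)
    (hle : ∀ s ∈ Ici a, h s * N s ≤ N' s) (ht : a ≤ t) :
    Real.exp (∫ τ in a..t, h τ) * N a ≤ N t := by
  set F := fun s => ∫ τ in a..s, h τ
  have hF : ∀ s ∈ Ico a t, HasDerivWithinAt F (h s) (Ici s) s :=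
    fun s hs => hasDerivWithinAt_integral_Ici hh hs.1
  have hFc : ContinuousOn F (Icc a t) := by
    rw [← uIcc_of_le ht]
    refine intervalIntegral.continuousOn_primitive_interval ?_
    rw [uIcc_of_le ht]
    exact (hh.mono Icc_subset_Ici_self).integrableOn_Icc
  have hNc : ContinuousOn N (Icc a t) :=
    fun s hs => (hN s hs.1).continuousWithinAt.mono Icc_subset_Ici_self
  have hmono : Real.exp (-F a) * N a ≤ Real.exp (-F t) * N t := by
    refine image_le_of_deriv_right_le_deriv_boundary (a := a) (b := t)
      (f := fun _ => Real.exp (-F a) * N a) (f' := 0) (B := fun s => Real.exp (-F s) * N s)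
      (B' := fun s => Real.exp (-F s) * (N' s - h s * N s)) continuousOn_const
      (fun _ _ => hasDerivWithinAt_const _ _ _) le_rfl (hFc.neg.rexp.mul hNc)
      (fun s hs => ?_) (fun s hs => ?_) ⟨ht, le_rfl⟩
    · exact ((hF s hs).neg.exp.mul ((hN s hs.1).mono (Ici_subset_Ici.2 hs.1))).congr_deriv
        (by simp only [Pi.neg_apply]; ring)
    · exact mul_nonneg (Real.exp_pos _).le (sub_nonneg.2 (hle s hs.1))
  simp only [F, intervalIntegral.integral_same, neg_zero, Real.exp_zero, one_mul,
    Real.exp_neg] at hmono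
  exact (le_inv_mul_iff₀ (Real.exp_pos _)).1 hmono

lemma IsCompact.exists_entry_le {α m n : Type*} [TopologicalSpace α] [Fintype m] [Fintype n]
    {K : Set α} (hK : IsCompact K) {H : α → Matrix m n ℝ}
    (hH : ∀ i j, ContinuousOn (fun t => H t i j) K) :
    ∃ C, 0 ≤ C ∧ ∀ t ∈ K, ∀ i j, H t i j ≤ C := by
  obtain ⟨C, hC⟩ := hK.exists_bound_of_continuousOn (f := fun t (p : m × n) => H t p.1 p.2)
    (continuousOn_pi.2 fun p => hH p.1 p.2)
  refine ⟨max C 0, le_max_right _ _, fun t ht i j => ?_⟩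
  calc H t i j ≤ ‖(fun p : m × n => H t p.1 p.2) (i, j)‖ := le_abs_self _
    _ ≤ C := (norm_le_pi_norm _ (i, j)).trans (hC t ht)
    _ ≤ max C 0 := le_max_left _ _

namespace Matrix

lemma sum_mulVec_apply {m n R : Type*} [Fintype m] [Fintype n] [CommSemiring R]
    (A : Matrix m n R) (v : n → R) : ∑ i, (A *ᵥ v) i = ∑ j, (∑ i, A i j) * v j := by
  simp only [mulVec, dotProduct, Finset.sum_mul]
  exact Finset.sum_comm

lemma iInf_sum_mul_sum_le_sum_mulVec {m n : Type*} [Fintype m] [Fintype n]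
    (A : Matrix m n ℝ) {v : n → ℝ} (hv : ∀ j, 0 ≤ v j) :
    (⨅ j, ∑ i, A i j) * ∑ j, v j ≤ ∑ i, (A *ᵥ v) i := by
  rw [sum_mulVec_apply, Finset.mul_sum]
  exact Finset.sum_le_sum fun j _ =>
    mul_le_mul_of_nonneg_right (ciInf_le (Finite.bddBelow_range _) j) (hv j)

lemma min_zero_mul_mul_le {ι : Type*} {A : Matrix ι ι ℝ} (hA : ∀ i j, i ≠ j → 0 ≤ A i j)
    (v : ι → ℝ) (i j : ι) : min (v i) 0 * (A i j * v j) ≤ A i j * (min (v i) 0 * min (v j) 0) := by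
  rcases le_total (v j) 0 with hj | hj
  · rw [min_eq_left hj]
    exact le_of_eq (by ring)
  · by_cases hij : i = j
    · subst hij
      simp [min_eq_right hj]
    · rw [min_eq_right hj, mul_zero, mul_zero]
      exact mul_nonpos_of_nonpos_of_nonneg (min_le_right _ _) (mul_nonneg (hA i j hij) hj)

variable {ι : Type*} [Fintype ι]

lemma sum_min_zero_mul_mulVec_le {A : Matrix ι ι ℝ} {C : ℝ} (hC : 0 ≤ C)
    (hA : ∀ i j, i ≠ j → 0 ≤ A i j) (hAC : ∀ i j, A i j ≤ C) (v : ι → ℝ) :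
    ∑ i, min (v i) 0 * (A *ᵥ v) i ≤ C * Fintype.card ι * ∑ i, min (v i) 0 ^ 2 := by
  have hprod : ∀ i j, 0 ≤ min (v i) 0 * min (v j) 0 := fun i j =>
    mul_nonneg_of_nonpos_of_nonpos (min_le_right _ _) (min_le_right _ _)
  calc ∑ i, min (v i) 0 * (A *ᵥ v) i = ∑ i, ∑ j, min (v i) 0 * (A i j * v j) := by
        simp only [mulVec, dotProduct, Finset.mul_sum]
    _ ≤ ∑ i, ∑ j, C * (min (v i) 0 * min (v j) 0) := by
        refine Finset.sum_le_sum fun i _ => Finset.sum_le_sum fun j _ => ?_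
        exact (min_zero_mul_mul_le hA v i j).trans
          (mul_le_mul_of_nonneg_right (hAC i j) (hprod i j))
    _ = C * (∑ i, min (v i) 0) ^ 2 := by
        rw [sq, Finset.sum_mul_sum, Finset.mul_sum]
        simp only [Finset.mul_sum]
    _ ≤ C * Fintype.card ι * ∑ i, min (v i) 0 ^ 2 := by
        rw [mul_assoc]
        gcongr
        exact sq_sum_le_card_mul_sum_sq

end Matrix

theorem nonneg_of_hasDerivWithinAt_mulVec {ι : Type*} [Fintype ι] {H : ℝ → Matrix ι ι ℝ}
    (hHcont : ∀ i j, ContinuousOn (fun t => H t i j) (Ici 0))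
    (hHess : ∀ t ∈ Ici (0 : ℝ), ∀ i j, i ≠ j → 0 ≤ H t i j) {x : ℝ → ι → ℝ}
    (hx : ∀ t ∈ Ici (0 : ℝ), ∀ i,
      HasDerivWithinAt (fun s => x s i) ((H t *ᵥ x t) i) (Ici 0) t)
    (hx0 : ∀ i, 0 ≤ x 0 i) {T : ℝ} (hT : 0 ≤ T) (i : ι) : 0 ≤ x T i := by
  obtain ⟨C, hC0, hC⟩ :=
    isCompact_Icc.exists_entry_le fun i j =>
      (hHcont i j).mono (Icc_subset_Ici_self : Icc 0 T ⊆ Ici 0)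
  set φ := fun t => ∑ i, min (x t i) 0 ^ 2
  have hφ : ∀ t ∈ Ici 0,
      HasDerivWithinAt φ (∑ i, 2 * min (x t i) 0 * (H t *ᵥ x t) i) (Ici 0) t :=
    fun t ht => HasDerivWithinAt.fun_sum fun i _ =>
      (hasDerivAt_min_zero_sq _).comp_hasDerivWithinAt t (hx t ht i)
  have hφT : φ T ≤ 0 := by
    refine le_zero_of_hasDerivWithinAt_le_mul (K := 2 * (C * Fintype.card ι))
      (fun t ht => (hφ t ht.1).continuousWithinAt.mono Icc_subset_Ici_self)
      (fun t ht => (hφ t ht.1).mono (Ici_subset_Ici.2 ht.1)) (by simp [φ, hx0]) (fun t ht => ?_)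
      T ⟨hT, le_rfl⟩
    have := sum_min_zero_mul_mulVec_le hC0 (hHess t ht.1) (hC t ⟨ht.1, ht.2.le⟩) (x t)
    simp only [φ, mul_assoc, ← Finset.mul_sum] at this ⊢
    linarith
  have hφT0 := (Finset.sum_eq_zero_iff_of_nonneg fun i _ => sq_nonneg _).1
    (le_antisymm hφT (by positivity)) i (Finset.mem_univ _)
  simpa using hφT0

theorem l1_lower_bound_of_nonneg_init_general
    (S : ℕ)
    (H : ℝ → Matrix (Fin S) (Fin S) ℝ)
    (hHcont : ∀ i j, ContinuousOn (fun t => H t i j) (Ici (0 : ℝ)))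
    (hHess : ∀ t ∈ Ici (0 : ℝ), ∀ i j, i ≠ j → 0 ≤ H t i j)
    (hlow : ℝ → ℝ)
    (hhlow : ∀ t, hlow t = ⨅ j, ∑ i, H t i j)
    (x : ℝ → Fin S → ℝ)
    (hx : ∀ t ∈ Ici (0 : ℝ), ∀ i,
      HasDerivWithinAt (fun s => x s i) ((H t).mulVec (x t) i) (Ici 0) t)
    (hx0 : ∀ i, 0 ≤ x 0 i) :
    ∀ t ∈ Ici (0 : ℝ),
      Real.exp (∫ τ in (0 : ℝ)..t, hlow τ) * ∑ i, |x 0 i| ≤ ∑ i, |x t i| := by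
  intro t ht
  have hx_nonneg : ∀ s ∈ Ici (0 : ℝ), ∀ i, 0 ≤ x s i :=
    fun s hs => nonneg_of_hasDerivWithinAt_mulVec hHcont hHess hx hx0 hs
  have hsum_abs : ∀ s ∈ Ici (0 : ℝ), ∑ i, |x s i| = ∑ i, x s i :=
    fun s hs => Finset.sum_congr rfl fun i _ => abs_of_nonneg (hx_nonneg s hs i)
  have hlow_cont : ContinuousOn hlow (Ici 0) := by
    rw [funext hhlow]
    exact ContinuousOn.ciInf_fintype fun j => continuousOn_finsetSum _ fun i _ => hHcont i j
  rw [hsum_abs t ht, hsum_abs 0 self_mem_Ici]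
  refine exp_integral_mul_le_of_mul_le_deriv hlow_cont
    (fun s hs => HasDerivWithinAt.fun_sum fun i _ => hx s hs i) (fun s hs => ?_) ht
  rw [hhlow]
  exact (H s).iInf_sum_mul_sum_le_sum_mulVec (hx_nonneg s hs)

/-- Lower bound `‖x(t)‖₁ ≥ exp(∫₀ᵗ h₋(τ) dτ) ‖x(0)‖₁` for solutions of
`x' = H(t)x` with essentially nonnegative `H(t)` and nonnegative initial
condition, where `h₋(t)` is the smallest column sum of `H(t)`. -/
theorem l1_lower_bound_of_nonneg_init
    (S : ℕ) (hS : 1 ≤ S)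
    (H : ℝ → Matrix (Fin S) (Fin S) ℝ)
    (hHcont : ∀ i j, ContinuousOn (fun t => H t i j) (Ici (0 : ℝ)))
    (hHess : ∀ t ∈ Ici (0 : ℝ), ∀ i j, i ≠ j → 0 ≤ H t i j)
    (hlow : ℝ → ℝ)
    (hhlow : ∀ t, hlow t = ⨅ j, ∑ i, H t i j)
    (x : ℝ → Fin S → ℝ)
    (hx : ∀ t ∈ Ici (0 : ℝ), ∀ i,
      HasDerivWithinAt (fun s => x s i) ((H t).mulVec (x t) i) (Ici 0) t)
    (hx0 : ∀ i, 0 ≤ x 0 i) :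
    ∀ t ∈ Ici (0 : ℝ),
      Real.exp (∫ τ in (0 : ℝ)..t, hlow τ) * ∑ i, |x 0 i| ≤ ∑ i, |x t i| :=
  l1_lower_bound_of_nonneg_init_general S H hHcont hHess hlow hhlow x hx hx0
end

section
/- (Theorem 1, upper bound.) Let S ≥ 1, let B : [0,∞) → M_S(ℝ) and f : [0,∞) → ℝ^S be continuous, and let z*, z** : [0,∞) → ℝ^S be differentiable with (z*)'(t) = B(t)z*(t) + f(t) and (z**)'(t) = B(t)z**(t) + f(t) for all t ≥ 0. Let D be an invertible S×S real matrix with nonnegative entries such that D B(t) D⁻¹ is essentially nonnegative for every t ≥ 0, and set h^*(t) = max_{1≤j≤S} ∑_{i=1}^S (D B(t) D⁻¹)_{ij}. Then ‖D(z*(t) − z**(t))‖₁ ≤ exp(∫₀ᵗ h^*(τ) dτ) · ‖D(z*(0) − z**(0))‖₁ for all t ≥ 0. -/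
/-!
The difference `w = D (z* - z**)` solves the homogeneous system `w' = H(t) w` with
`H = D B D⁻¹` essentially nonnegative. For small `h > 0` the matrix `1 + h H` is entrywise
nonnegative with column sums `1 + h ⋅ (column sums of H)`, so it contracts the `ℓ¹` norm up to the
factor `1 + h h*`; hence the upper right Dini derivative of `g = ‖w‖₁` is at most `h* g`. The
product `exp(-∫₀ᵗ h*) ⋅ g` then has nonpositive Dini derivative, so it is nonincreasing.
-/

open Set Filter Topology
open scoped Matrix

namespace Matrix

variable {m n : Type*} [Fintype m] [Fintype n]

theorem sum_abs_mulVec_le_of_nonneg {M : Matrix m n ℝ} (hM : ∀ i j, 0 ≤ M i j) {c : ℝ}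
    (hc : ∀ j, ∑ i, M i j ≤ c) (v : n → ℝ) : ∑ i, |(M *ᵥ v) i| ≤ c * ∑ j, |v j| :=
  calc ∑ i, |(M *ᵥ v) i| ≤ ∑ i, ∑ j, M i j * |v j| := by
        gcongr with i
        refine (Finset.abs_sum_le_sum_abs _ _).trans_eq (Finset.sum_congr rfl fun j _ => ?_)
        rw [abs_mul, abs_of_nonneg (hM i j)]
    _ = ∑ j, (∑ i, M i j) * |v j| := by simp only [Finset.sum_mul]; exact Finset.sum_comm
    _ ≤ ∑ j, c * |v j| := by gcongr with j; exact hc j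
    _ = c * ∑ j, |v j| := (Finset.mul_sum _ _ _).symm

theorem sum_abs_add_smul_mulVec_le [DecidableEq n] {H : Matrix n n ℝ}
    (hH : ∀ i j, i ≠ j → 0 ≤ H i j) {c : ℝ} (hc : ∀ j, ∑ i, H i j ≤ c) {h : ℝ} (h0 : 0 ≤ h)
    (hdiag : ∀ i, 0 ≤ 1 + h * H i i) (v : n → ℝ) :
    ∑ i, |v i + h * (H *ᵥ v) i| ≤ (1 + h * c) * ∑ i, |v i| := by
  have hM : ∀ i j, 0 ≤ (1 + h • H) i j := fun i j => by
    rcases eq_or_ne i j with rfl | hij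
    · simpa using hdiag i
    · simpa [one_apply_ne hij] using mul_nonneg h0 (hH i j hij)
  have hcM : ∀ j, ∑ i, (1 + h • H) i j ≤ 1 + h * c := fun j => by
    simp only [add_apply, smul_apply, smul_eq_mul, Finset.sum_add_distrib, ← Finset.mul_sum,
      one_apply, Finset.sum_ite_eq', Finset.mem_univ, if_true]
    gcongr
    exact hc j
  simpa [add_mulVec, smul_mulVec] using sum_abs_mulVec_le_of_nonneg hM hcM v

theorem mul_mul_nonsing_inv_mulVec_mulVec {R : Type*} [CommRing R] [DecidableEq n]
    {D : Matrix n n R} (hD : IsUnit D.det) (B : Matrix n n R) (v : n → R) :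
    (D * B * D⁻¹) *ᵥ (D *ᵥ v) = D *ᵥ (B *ᵥ v) := by
  rw [mulVec_mulVec, Matrix.mul_assoc, nonsing_inv_mul D hD, Matrix.mul_one, mulVec_mulVec]

end Matrix

theorem ContinuousOn.ciSup_of_fintype {α ι : Type*} [TopologicalSpace α] [Fintype ι]
    [Nonempty ι] {F : ι → α → ℝ} {s : Set α} (hF : ∀ i, ContinuousOn (F i) s) :
    ContinuousOn (fun x => ⨆ i, F i x) s := by
  simpa only [← Finset.sup'_univ_eq_ciSup] using
    ContinuousOn.finset_sup'_apply Finset.univ_nonempty fun i _ => hF i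

theorem hasDerivWithinAt_mulVec_apply {m n : Type*} [Fintype n] (M : Matrix m n ℝ)
    {v : ℝ → n → ℝ} {v' : n → ℝ} {s : Set ℝ} {x : ℝ}
    (hv : ∀ j, HasDerivWithinAt (v · j) (v' j) s x) (i : m) :
    HasDerivWithinAt (fun t => (M *ᵥ v t) i) ((M *ᵥ v') i) s x := by
  simpa [Matrix.mulVec, dotProduct] using
    HasDerivWithinAt.fun_sum fun j _ => (hv j).const_mul (M i j)

theorem hasDerivWithinAt_mulVec_sub_of_affine {n : Type*} [Fintype n] [DecidableEq n]
    {B D : Matrix n n ℝ} (hD : IsUnit D.det) {c : n → ℝ} {z₁ z₂ : ℝ → n → ℝ} {s : Set ℝ}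
    {x : ℝ} (hz₁ : ∀ i, HasDerivWithinAt (z₁ · i) ((B *ᵥ z₁ x) i + c i) s x)
    (hz₂ : ∀ i, HasDerivWithinAt (z₂ · i) ((B *ᵥ z₂ x) i + c i) s x) (i : n) :
    HasDerivWithinAt (fun t => (D *ᵥ (z₁ t - z₂ t)) i)
      (((D * B * D⁻¹) *ᵥ (D *ᵥ (z₁ x - z₂ x))) i) s x := by
  have hdiff (j : n) :
      HasDerivWithinAt (fun t => (z₁ t - z₂ t) j) ((B *ᵥ (z₁ x - z₂ x)) j) s x := by
    simpa [Matrix.mulVec_sub] using (hz₁ j).fun_sub (hz₂ j)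
  rw [Matrix.mul_mul_nonsing_inv_mulVec_mulVec hD]
  exact hasDerivWithinAt_mulVec_apply D hdiff i

section DiniDerivative

variable {ι : Type*} [Fintype ι]

theorem slope_sum_abs_le (w : ℝ → ι → ℝ) (d : ι → ℝ) {x z : ℝ} (hxz : x < z) :
    slope (fun s => ∑ i, |w s i|) x z ≤
      (∑ i, |w x i + (z - x) * d i| - ∑ i, |w x i|) / (z - x) +
        ∑ i, |slope (w · i) x z - d i| := by
  have hzx : 0 < z - x := sub_pos.2 hxz
  have hcomp (i : ι) :
      |w z i| ≤ |w x i + (z - x) * d i| + (z - x) * |slope (w · i) x z - d i| := by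
    have : w z i = (w x i + (z - x) * d i) + (z - x) * (slope (w · i) x z - d i) := by
      rw [slope_def_field]; field_simp; ring
    rw [this]
    refine (abs_add_le _ _).trans_eq ?_
    rw [abs_mul, abs_of_pos hzx]
  have hsum := Finset.sum_le_sum fun i (_ : i ∈ Finset.univ) => hcomp i
  rw [Finset.sum_add_distrib, ← Finset.mul_sum] at hsum
  rw [slope_def_field, div_add' _ _ _ hzx.ne', div_le_div_iff_of_pos_right hzx]
  linarith

theorem eventually_slope_sum_abs_lt [DecidableEq ι] {H : Matrix ι ι ℝ}
    (hH : ∀ i j, i ≠ j → 0 ≤ H i j) {c : ℝ} (hc : ∀ j, ∑ i, H i j ≤ c) {w : ℝ → ι → ℝ}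
    {x : ℝ} (hw : ∀ i, HasDerivWithinAt (w · i) ((H *ᵥ w x) i) (Ici x) x) {r : ℝ}
    (hr : c * ∑ i, |w x i| < r) : ∀ᶠ z in 𝓝[>] x, slope (fun s => ∑ i, |w s i|) x z < r := by
  have herr : Tendsto (fun z => ∑ i, |slope (w · i) x z - (H *ᵥ w x) i|) (𝓝[>] x) (𝓝 0) := by
    rw [← Finset.sum_const_zero]
    refine tendsto_finsetSum _ fun i _ => ?_
    have := ((hasDerivWithinAt_iff_tendsto_slope' self_notMem_Ioi).1 (hw i).Ioi_of_Ici).sub_const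
      ((H *ᵥ w x) i)
    simpa using this.abs
  have hdiag : ∀ᶠ z in 𝓝[>] x, ∀ i, 0 ≤ 1 + (z - x) * H i i := by
    refine eventually_all.2 fun i => ?_
    have : Tendsto (fun z => 1 + (z - x) * H i i) (𝓝[>] x) (𝓝 (1 + (x - x) * H i i)) :=
      ((tendsto_id.sub_const x).mul_const _ |>.const_add 1).mono_left nhdsWithin_le_nhds
    rw [sub_self, zero_mul, add_zero] at this
    exact (this.eventually_const_lt one_pos).mono fun z hz => hz.le
  filter_upwards [hdiag, herr.eventually_lt_const (sub_pos.2 hr), self_mem_nhdsWithin]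
    with z hdiag_z herr_z (hxz : x < z)
  have hzx : 0 < z - x := sub_pos.2 hxz
  have hℓ1 := Matrix.sum_abs_add_smul_mulVec_le hH hc hzx.le hdiag_z (w x)
  have : (∑ i, |w x i + (z - x) * (H *ᵥ w x) i| - ∑ i, |w x i|) / (z - x) ≤
      c * ∑ i, |w x i| := by
    rw [div_le_iff₀ hzx]; linarith
  linarith [slope_sum_abs_le w (H *ᵥ w x) hxz]

end DiniDerivative

theorem frequently_slope_mul_lt {E g : ℝ → ℝ} {x e k r : ℝ}
    (hE : HasDerivWithinAt E e (Ioi x) x) (hEx : 0 < E x)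
    (hg : ∀ r, k < r → ∃ᶠ z in 𝓝[>] x, slope g x z < r) (hr : E x * k + g x * e < r) :
    ∃ᶠ z in 𝓝[>] x, slope (fun s => E s * g s) x z < r := by
  set δ := (r - (E x * k + g x * e)) / (2 * E x)
  have hδ : 0 < δ := div_pos (sub_pos.2 hr) (by positivity)
  have hlim : Tendsto (fun z => E z * (k + δ) + g x * slope E x z) (𝓝[>] x)
      (𝓝 (E x * (k + δ) + g x * e)) :=
    (hE.continuousWithinAt.tendsto.mul_const _).add
      (((hasDerivWithinAt_iff_tendsto_slope' self_notMem_Ioi).1 hE).const_mul _)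
  have hlt : E x * (k + δ) + g x * e < r := by
    have : E x * δ = (r - (E x * k + g x * e)) / 2 := by
      simp only [δ]; field_simp
    linarith
  refine ((hg _ (lt_add_of_pos_right k hδ)).and_eventually
    ((hE.continuousWithinAt.tendsto.eventually_const_lt hEx).and
      (hlim.eventually_lt_const hlt))).mono ?_
  rintro z ⟨hgz, hEz, hz⟩
  have hslope : slope (fun s => E s * g s) x z = E z * slope g x z + g x * slope E x z := by
    simp only [slope_def_field]; ring
  rw [hslope]
  linarith [mul_lt_mul_of_pos_left hgz hEz]

theorem hasDerivWithinAt_integral_of_continuousOn_Icc {h : ℝ → ℝ} {a b x : ℝ}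
    (hh : ContinuousOn h (Icc a b)) (hx : x ∈ Icc a b) :
    HasDerivWithinAt (fun u => ∫ τ in a..u, h τ) (h x) (Icc a b) x :=
  have : Fact (x ∈ Icc a b) := ⟨hx⟩
  intervalIntegral.integral_hasDerivWithinAt_right
    ((hh.mono (uIcc_subset_Icc (left_mem_Icc.2 (hx.1.trans hx.2)) hx)).intervalIntegrable)
    (hh.stronglyMeasurableAtFilter_nhdsWithin measurableSet_Icc x) (hh x hx)

theorem le_exp_integral_mul_of_liminf_slope_right_le {g h : ℝ → ℝ} {a b : ℝ}
    (hg : ContinuousOn g (Icc a b)) (hh : ContinuousOn h (Icc a b))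
    (bound : ∀ x ∈ Ico a b, ∀ r, h x * g x < r → ∃ᶠ z in 𝓝[>] x, slope g x z < r) :
    ∀ ⦃x⦄, x ∈ Icc a b → g x ≤ Real.exp (∫ τ in a..x, h τ) * g a := by
  set E : ℝ → ℝ := fun u => Real.exp (-∫ τ in a..u, h τ)
  have hE : ∀ x ∈ Icc a b, HasDerivWithinAt E (-h x * E x) (Icc a b) x := fun x hx => by
    simpa [E, mul_comm] using (hasDerivWithinAt_integral_of_continuousOn_Icc hh hx).neg.exp
  have hq : ∀ x ∈ Icc a b, E x * g x ≤ g a := by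
    refine image_le_of_liminf_slope_right_le_deriv_boundary (B' := 0)
      (fun x hx => ((hE x hx).continuousWithinAt).mul (hg x hx)) (by simp [E])
      continuousOn_const (fun x _ => hasDerivWithinAt_const _ _ _) fun x hx r hr => ?_
    refine frequently_slope_mul_lt ((hE x (Ico_subset_Icc_self hx)).mono_of_mem_nhdsWithin
      (Icc_mem_nhdsGT_of_mem hx)) (Real.exp_pos _) (bound x hx) ?_
    rw [show E x * (h x * g x) + g x * (-h x * E x) = 0 by ring]
    exact hr
  intro x hx
  have := hq x hx
  simp only [E, Real.exp_neg] at this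
  rwa [inv_mul_le_iff₀ (Real.exp_pos _)] at this

theorem theorem_one_upper_bound_general
    (S : ℕ) (hS : 1 ≤ S)
    (B : ℝ → Matrix (Fin S) (Fin S) ℝ) (f : ℝ → Fin S → ℝ)
    (hBcont : ∀ i j, ContinuousOn (fun t => B t i j) (Ici (0 : ℝ)))
    (z₁ z₂ : ℝ → Fin S → ℝ)
    (hz₁ : ∀ t ∈ Ici (0 : ℝ), ∀ i,
      HasDerivWithinAt (fun s => z₁ s i) ((B t).mulVec (z₁ t) i + f t i) (Ici 0) t)
    (hz₂ : ∀ t ∈ Ici (0 : ℝ), ∀ i,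
      HasDerivWithinAt (fun s => z₂ s i) ((B t).mulVec (z₂ t) i + f t i) (Ici 0) t)
    (D : Matrix (Fin S) (Fin S) ℝ)
    (hDinv : IsUnit D.det)
    (hHess : ∀ t ∈ Ici (0 : ℝ), ∀ i j, i ≠ j → 0 ≤ (D * B t * D⁻¹) i j)
    (hstar : ℝ → ℝ)
    (hhstar : ∀ t, hstar t = ⨆ j, ∑ i, (D * B t * D⁻¹) i j) :
    ∀ t ∈ Ici (0 : ℝ),
      ∑ i, |D.mulVec (z₁ t - z₂ t) i| ≤
        Real.exp (∫ τ in (0 : ℝ)..t, hstar τ) * ∑ i, |D.mulVec (z₁ 0 - z₂ 0) i| := by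
  have : Nonempty (Fin S) := Fin.pos_iff_nonempty.mp hS
  intro t ht
  set w : ℝ → Fin S → ℝ := fun s => D *ᵥ (z₁ s - z₂ s)
  have hw : ∀ x ∈ Ici (0 : ℝ), ∀ i,
      HasDerivWithinAt (w · i) (((D * B x * D⁻¹) *ᵥ w x) i) (Ici 0) x := fun x hx =>
    hasDerivWithinAt_mulVec_sub_of_affine hDinv (hz₁ x hx) (hz₂ x hx)
  have hcol (x : ℝ) (j : Fin S) : ∑ i, (D * B x * D⁻¹) i j ≤ hstar x :=
    (hhstar x).symm ▸
      le_ciSup (f := fun j => ∑ i, (D * B x * D⁻¹) i j) (Finite.bddAbove_range _) j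
  have hB : ContinuousOn B (Ici 0) := continuousOn_pi.2 fun i => continuousOn_pi.2 (hBcont i)
  have hBD : ContinuousOn (fun x => D * B x * D⁻¹) (Ici 0) :=
    (continuousOn_const.mul hB).mul continuousOn_const
  have hstar_cont : ContinuousOn hstar (Icc 0 t) := by
    refine (ContinuousOn.ciSup_of_fintype fun j => continuousOn_finsetSum _ fun i _ =>
      ?_).congr fun x _ => hhstar x
    exact ((continuous_apply j).comp (continuous_apply i)).comp_continuousOn
      (hBD.mono Icc_subset_Ici_self)
  have hwc (i : Fin S) : ContinuousOn (w · i) (Icc 0 t) := fun x hx =>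
    (hw x hx.1 i).continuousWithinAt.mono Icc_subset_Ici_self
  have hg : ContinuousOn (fun s => ∑ i, |w s i|) (Icc 0 t) :=
    continuousOn_finsetSum _ fun i _ => (hwc i).abs
  exact le_exp_integral_mul_of_liminf_slope_right_le hg hstar_cont
    (fun x hx r hr => (eventually_slope_sum_abs_lt (hHess x hx.1) (hcol x)
      (fun i => (hw x hx.1 i).mono (Ici_subset_Ici.2 hx.1)) hr).frequently) ⟨ht, le_rfl⟩

/-- Theorem 1 (upper bound): if `z*` and `z**` both solve
`z' = B(t)z + f(t)` on `[0,∞)`, `D` is invertible with nonnegative entries and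
`D B(t) D⁻¹` is essentially nonnegative, then
`‖D(z*(t) − z**(t))‖₁ ≤ exp(∫₀ᵗ h*(τ) dτ) ‖D(z*(0) − z**(0))‖₁`,
where `h*(t)` is the largest column sum of `D B(t) D⁻¹`. -/
theorem theorem_one_upper_bound
    (S : ℕ) (hS : 1 ≤ S)
    (B : ℝ → Matrix (Fin S) (Fin S) ℝ) (f : ℝ → Fin S → ℝ)
    (hBcont : ∀ i j, ContinuousOn (fun t => B t i j) (Ici (0 : ℝ)))
    (hfcont : ∀ i, ContinuousOn (fun t => f t i) (Ici (0 : ℝ)))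
    (z₁ z₂ : ℝ → Fin S → ℝ)
    (hz₁ : ∀ t ∈ Ici (0 : ℝ), ∀ i,
      HasDerivWithinAt (fun s => z₁ s i) ((B t).mulVec (z₁ t) i + f t i) (Ici 0) t)
    (hz₂ : ∀ t ∈ Ici (0 : ℝ), ∀ i,
      HasDerivWithinAt (fun s => z₂ s i) ((B t).mulVec (z₂ t) i + f t i) (Ici 0) t)
    (D : Matrix (Fin S) (Fin S) ℝ)
    (hDinv : IsUnit D.det)
    (hDnonneg : ∀ i j, 0 ≤ D i j)
    (hHess : ∀ t ∈ Ici (0 : ℝ), ∀ i j, i ≠ j → 0 ≤ (D * B t * D⁻¹) i j)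
    (hstar : ℝ → ℝ)
    (hhstar : ∀ t, hstar t = ⨆ j, ∑ i, (D * B t * D⁻¹) i j) :
    ∀ t ∈ Ici (0 : ℝ),
      ∑ i, |D.mulVec (z₁ t - z₂ t) i| ≤
        Real.exp (∫ τ in (0 : ℝ)..t, hstar τ) * ∑ i, |D.mulVec (z₁ 0 - z₂ 0) i| :=
  theorem_one_upper_bound_general S hS B f hBcont z₁ z₂ hz₁ hz₂ D hDinv hHess hstar hhstar
end

section
/- (Theorem 1, lower bound.) Let S ≥ 1, let B : [0,∞) → M_S(ℝ) and f : [0,∞) → ℝ^S be continuous, and let z*, z** : [0,∞) → ℝ^S be differentiable with (z*)'(t) = B(t)z*(t) + f(t) and (z**)'(t) = B(t)z**(t) + f(t) for all t ≥ 0. Let D be an invertible S×S real matrix with nonnegative entries such that D B(t) D⁻¹ is essentially nonnegative for every t ≥ 0, and set h_*(t) = min_{1≤j≤S} ∑_{i=1}^S (D B(t) D⁻¹)_{ij}. If D(z*(0) − z**(0)) ≥ 0 componentwise, then ‖D(z*(t) − z**(t))‖₁ ≥ exp(∫₀ᵗ h_*(τ) dτ) · ‖D(z*(0) − z**(0))‖₁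 for all t ≥ 0. -/
/-!
`y = D (z₁ - z₂)` solves the homogeneous system `y' = A(t) y` with `A = D B D⁻¹`. Because `A` is
essentially nonnegative, the flow cannot leave the nonnegative orthant (at a boundary point with
`yᵢ = 0` the derivative `(A y)ᵢ` is a sum of nonnegative terms), so `‖y‖₁ = ∑ yᵢ`. Its derivative
is `∑ⱼ (column sum j of A) yⱼ ≥ h₋ ∑ yⱼ`, and Grönwall's argument on `‖y‖₁ e^{-∫ h₋}`
gives the bound.
-/

open Set Filter Topology Matrix

theorem HasDerivWithinAt.eventually_lt_of_pos {f : ℝ → ℝ} {d x : ℝ}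
    (hf : HasDerivWithinAt f d (Ici x) x) (hd : 0 < d) : ∀ᶠ y in 𝓝[>] x, f x < f y := by
  have hslope : Tendsto (slope f x) (𝓝[>] x) (𝓝 d) :=
    (hasDerivWithinAt_iff_tendsto_slope' self_notMem_Ioi).1 hf.Ioi_of_Ici
  filter_upwards [hslope.eventually (lt_mem_nhds hd), self_mem_nhdsWithin] with y hy hxy
  exact (slope_pos_iff_of_le (le_of_lt hxy)).1 hy

theorem nonneg_of_hasDerivWithinAt_pos_of_eq_zero {ι : Type*} [Finite ι] {u : ℝ → ι → ℝ}
    {a b : ℝ} (hu : ∀ i, ContinuousOn (fun t => u t i) (Icc a b)) (ha : ∀ i, 0 ≤ u a i)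
    (hderiv : ∀ x ∈ Ico a b, (∀ j, 0 ≤ u x j) → ∀ i, u x i = 0 →
      ∃ d > 0, HasDerivWithinAt (fun t => u t i) d (Ici x) x) :
    ∀ t ∈ Icc a b, ∀ i, 0 ≤ u t i := by
  set s := {t | ∀ i, 0 ≤ u t i}
  have hclosed : IsClosed (s ∩ Icc a b) := by
    have : s ∩ Icc a b = Icc a b ∩ ⋂ i, Icc a b ∩ (fun t => u t i) ⁻¹' Ici 0 := by
      ext t
      simp only [s, mem_inter_iff, mem_iInter, mem_ofPred_eq, mem_preimage, mem_Ici]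
      exact ⟨fun ⟨h, ht⟩ => ⟨ht, fun i => ⟨ht, h i⟩⟩, fun ⟨ht, h⟩ => ⟨fun i => (h i).2, ht⟩⟩
    rw [this]
    exact isClosed_Icc.inter <| isClosed_iInter fun i =>
      (hu i).preimage_isClosed_of_isClosed isClosed_Icc isClosed_Ici
  refine fun t ht => hclosed.Icc_subset_of_forall_mem_nhdsWithin ha ?_ ht
  rintro x ⟨hx, hxab⟩
  refine eventually_all.2 fun i => ?_
  rcases (hx i).eq_or_lt with hzero | hpos
  · obtain ⟨d, hd, hder⟩ := hderiv x hxab hx i hzero.symm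
    filter_upwards [hder.eventually_lt_of_pos hd] with y hy
    exact hzero.le.trans hy.le
  · have hIcc : Icc a b ∈ 𝓝[>] x := ordConnected_Icc.mem_nhdsGT (Ico_subset_Icc_self hxab)
      (right_mem_Icc.2 (hxab.1.trans hxab.2.le)) hxab.2
    exact ((hu i x (Ico_subset_Icc_self hxab)).mono_of_mem_nhdsWithin hIcc).eventually
      (eventually_ge_nhds hpos)

theorem Matrix.mulVec_apply_nonneg_of_eq_zero {ι : Type*} [Fintype ι] {A : Matrix ι ι ℝ}
    {u : ι → ℝ} {i : ι} (hA : ∀ j, i ≠ j → 0 ≤ A i j) (hu : ∀ j, 0 ≤ u j) (hui : u i = 0) :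
    0 ≤ (A *ᵥ u) i :=
  Finset.sum_nonneg fun j _ => by
    rcases eq_or_ne i j with rfl | hij
    · simp [hui]
    · exact mul_nonneg (hA j hij) (hu j)

theorem nonneg_of_hasDerivWithinAt_mulVec_s5 {ι : Type*} [Fintype ι] {A : ℝ → Matrix ι ι ℝ}
    {y : ℝ → ι → ℝ} {a b K : ℝ} (hy : ∀ i, ContinuousOn (fun t => y t i) (Icc a b))
    (hy' : ∀ t ∈ Ico a b, ∀ i, HasDerivWithinAt (fun s => y s i) ((A t *ᵥ y t) i) (Ici t) t)
    (hA : ∀ t ∈ Ico a b, ∀ i j, i ≠ j → 0 ≤ A t i j)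
    (hK : ∀ t ∈ Ico a b, ∀ i, ∑ j, A t i j ≤ K) (ha : ∀ i, 0 ≤ y a i) :
    ∀ t ∈ Icc a b, ∀ i, 0 ≤ y t i := by
  intro t₀ ht₀ i₀
  refine le_of_forall_pos_le_add fun ε hε => ?_
  -- `e` grows faster than row sums `≤ K` can pull `y + e` down, so `y + e` stays nonnegative.
  set e : ℝ → ℝ := fun t => ε * Real.exp ((K + 1) * (t - t₀))
  have he : ∀ t, HasDerivAt e ((K + 1) * e t) t := fun t => by
    simpa [e, mul_comm, mul_left_comm] using
      (((hasDerivAt_id t).sub_const t₀).const_mul (K + 1)).exp.const_mul ε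
  have he_pos : ∀ t, 0 < e t := fun t => by positivity
  set u : ℝ → ι → ℝ := fun t i => y t i + e t
  have hu := nonneg_of_hasDerivWithinAt_pos_of_eq_zero (u := u) (a := a) (b := b)
    (fun i => (hy i).add (fun t _ => (he t).continuousAt.continuousWithinAt))
    (fun i => add_nonneg (ha i) (he_pos a).le) ?_ t₀ ht₀ i₀
  · simpa [u, e] using hu
  intro x hx hux i hui
  refine ⟨(A x *ᵥ y x) i + (K + 1) * e x, ?_, (hy' x hx i).add (he x).hasDerivWithinAt⟩
  have hyu : y x = u x - fun _ => e x := by ext j; simp [u]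
  have hrow : (A x *ᵥ fun _ => e x) i = (∑ j, A x i j) * e x := by
    simp [mulVec, dotProduct, Finset.sum_mul]
  have hAu := (A x).mulVec_apply_nonneg_of_eq_zero (hA x hx i) hux hui
  rw [hyu, mulVec_sub, Pi.sub_apply, hrow]
  nlinarith [hK x hx i, he_pos x]

theorem Matrix.iInf_colSum_mul_sum_le_sum_mulVec {ι : Type*} [Fintype ι] (A : Matrix ι ι ℝ)
    {y : ι → ℝ} (hy : ∀ j, 0 ≤ y j) :
    (⨅ j, ∑ i, A i j) * ∑ j, y j ≤ ∑ i, (A *ᵥ y) i := by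
  have hswap : ∑ i, (A *ᵥ y) i = ∑ j, (∑ i, A i j) * y j := by
    simp only [mulVec, dotProduct, Finset.sum_mul]
    exact Finset.sum_comm
  rw [hswap, Finset.mul_sum]
  exact Finset.sum_le_sum fun j _ =>
    mul_le_mul_of_nonneg_right (ciInf_le (Finite.bddBelow_range _) j) (hy j)

theorem exp_integral_mul_le_of_hasDerivAt {N N' h : ℝ → ℝ} {a b : ℝ} (hab : a ≤ b)
    (hh : ContinuousOn h (Icc a b)) (hN : ContinuousOn N (Icc a b))
    (hN' : ∀ t ∈ Ioo a b, HasDerivAt N (N' t) t) (hle : ∀ t ∈ Ioo a b, h t * N t ≤ N' t) :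
    Real.exp (∫ t in a..b, h t) * N a ≤ N b := by
  set G : ℝ → ℝ := fun t => ∫ s in a..t, h s
  have hG : ContinuousOn G (Icc a b) := by
    have := intervalIntegral.continuousOn_primitive_interval (a := a) (b := b)
      (μ := MeasureTheory.volume) (f := h) (by rw [uIcc_of_le hab]; exact hh.integrableOn_Icc)
    rwa [uIcc_of_le hab] at this
  have hG' : ∀ t ∈ Ioo a b, HasDerivAt G (h t) t := fun t ht =>
    intervalIntegral.integral_hasDerivAt_right
      ((hh.mono (Icc_subset_Icc le_rfl ht.2.le)).intervalIntegrable_of_Icc ht.1.le)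
      ((hh.mono Ioo_subset_Icc_self).stronglyMeasurableAtFilter isOpen_Ioo t ht)
      (hh.continuousAt (Icc_mem_nhds ht.1 ht.2))
  have hmono : MonotoneOn (fun t => N t * Real.exp (-G t)) (Icc a b) := by
    refine monotoneOn_of_hasDerivWithinAt_nonneg (convex_Icc a b)
      (hN.mul (hG.neg.rexp)) (f' := fun t => (N' t - h t * N t) * Real.exp (-G t)) ?_ ?_
    · intro t ht
      rw [interior_Icc] at ht
      exact ((hN' t ht).fun_mul (hG' t ht).fun_neg.exp).hasDerivWithinAt.congr_deriv (by ring)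
    · intro t ht
      rw [interior_Icc] at ht
      exact mul_nonneg (sub_nonneg.2 (hle t ht)) (Real.exp_pos _).le
  have := hmono (left_mem_Icc.2 hab) (right_mem_Icc.2 hab) hab
  simp only [G, intervalIntegral.integral_same, neg_zero, Real.exp_zero, mul_one] at this
  calc Real.exp (G b) * N a ≤ Real.exp (G b) * (N b * Real.exp (-G b)) := by gcongr
    _ = N b := by rw [Real.exp_neg]; field_simp

theorem hasDerivWithinAt_conj_mulVec {ι : Type*} [Fintype ι] [DecidableEq ι]
    {B D : Matrix ι ι ℝ} (hD : IsUnit D.det) {w : ℝ → ι → ℝ} {s : Set ℝ} {t : ℝ}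
    (hw : ∀ j, HasDerivWithinAt (fun r => w r j) ((B *ᵥ w t) j) s t) (i : ι) :
    HasDerivWithinAt (fun r => (D *ᵥ w r) i) (((D * B * D⁻¹) *ᵥ (D *ᵥ w t)) i) s t := by
  have hconj : (D * B * D⁻¹) *ᵥ (D *ᵥ w t) = D *ᵥ (B *ᵥ w t) := by
    rw [mulVec_mulVec, mulVec_mulVec, Matrix.mul_assoc _ D⁻¹, nonsing_inv_mul D hD, mul_one]
  rw [hconj]
  exact HasDerivWithinAt.fun_sum fun j _ => (hw j).const_mul (D i j)

theorem exists_forall_sum_le_of_continuousOn {ι : Type*} [Fintype ι] {A : ℝ → Matrix ι ι ℝ}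
    {s : Set ℝ} (hs : IsCompact s) (hA : ∀ i j, ContinuousOn (fun t => A t i j) s) :
    ∃ K, ∀ t ∈ s, ∀ i, ∑ j, A t i j ≤ K := by
  choose K hK using fun i => hs.bddAbove_image (continuousOn_finsetSum _ fun j _ => hA i j)
  obtain ⟨M, hM⟩ := Finite.exists_le K
  exact ⟨M, fun t ht i => (hK i (mem_image_of_mem _ ht)).trans (hM i)⟩

theorem continuousOn_mul_mul_apply {ι : Type*} [Fintype ι] {B : ℝ → Matrix ι ι ℝ}
    {s : Set ℝ} (C D : Matrix ι ι ℝ) (hB : ∀ i j, ContinuousOn (fun t => B t i j) s) (i j : ι) :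
    ContinuousOn (fun t => (C * B t * D) i j) s := by
  simp only [mul_apply]
  exact continuousOn_finsetSum _ fun k _ => (continuousOn_finsetSum _ fun l _ =>
    continuousOn_const.mul (hB l k)).mul continuousOn_const

theorem continuousOn_iInf_colSum {ι : Type*} [Fintype ι] [Nonempty ι] {A : ℝ → Matrix ι ι ℝ}
    {s : Set ℝ} (hA : ∀ i j, ContinuousOn (fun t => A t i j) s) :
    ContinuousOn (fun t => ⨅ j, ∑ i, A t i j) s := by
  simp only [← Finset.inf'_univ_eq_ciInf]
  exact ContinuousOn.finset_inf'_apply _ fun j _ => continuousOn_finsetSum _ fun i _ => hA i j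

theorem theorem_one_lower_bound_general
    (S : ℕ) (hS : 1 ≤ S)
    (B : ℝ → Matrix (Fin S) (Fin S) ℝ) (f : ℝ → Fin S → ℝ)
    (hBcont : ∀ i j, ContinuousOn (fun t => B t i j) (Ici (0 : ℝ)))
    (z₁ z₂ : ℝ → Fin S → ℝ)
    (hz₁ : ∀ t ∈ Ici (0 : ℝ), ∀ i,
      HasDerivWithinAt (fun s => z₁ s i) ((B t).mulVec (z₁ t) i + f t i) (Ici 0) t)
    (hz₂ : ∀ t ∈ Ici (0 : ℝ), ∀ i,
      HasDerivWithinAt (fun s => z₂ s i) ((B t).mulVec (z₂ t) i + f t i) (Ici 0) t)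
    (D : Matrix (Fin S) (Fin S) ℝ)
    (hDinv : IsUnit D.det)
    (hHess : ∀ t ∈ Ici (0 : ℝ), ∀ i j, i ≠ j → 0 ≤ (D * B t * D⁻¹) i j)
    (hlow : ℝ → ℝ)
    (hhlow : ∀ t, hlow t = ⨅ j, ∑ i, (D * B t * D⁻¹) i j)
    (hinit : ∀ i, 0 ≤ D.mulVec (z₁ 0 - z₂ 0) i) :
    ∀ t ∈ Ici (0 : ℝ),
      Real.exp (∫ τ in (0 : ℝ)..t, hlow τ) * ∑ i, |D.mulVec (z₁ 0 - z₂ 0) i| ≤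
        ∑ i, |D.mulVec (z₁ t - z₂ t) i| := by
  intro T hT
  have : Nonempty (Fin S) := Fin.pos_iff_nonempty.mp hS
  set A : ℝ → Matrix (Fin S) (Fin S) ℝ := fun t => D * B t * D⁻¹
  set y : ℝ → Fin S → ℝ := fun t => D *ᵥ (z₁ t - z₂ t)
  have hIcc : Icc 0 T ⊆ Ici 0 := Icc_subset_Ici_self
  have hA : ∀ i j, ContinuousOn (fun t => A t i j) (Icc 0 T) :=
    continuousOn_mul_mul_apply D D⁻¹ fun i j => (hBcont i j).mono hIcc
  have hy' : ∀ t ∈ Ici (0 : ℝ), ∀ i,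
      HasDerivWithinAt (fun s => y s i) ((A t *ᵥ y t) i) (Ici 0) t := fun t ht =>
    hasDerivWithinAt_conj_mulVec (B := B t) (w := fun r => z₁ r - z₂ r) hDinv fun j =>
      ((hz₁ t ht j).sub (hz₂ t ht j)).congr_deriv (by simp [mulVec_sub])
  have hy : ∀ i, ContinuousOn (fun t => y t i) (Icc 0 T) := fun i t ht =>
    (hy' t (hIcc ht) i).continuousWithinAt.mono hIcc
  obtain ⟨K, hK⟩ := exists_forall_sum_le_of_continuousOn isCompact_Icc hA
  have hy_nonneg := nonneg_of_hasDerivWithinAt_mulVec_s5 hy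
    (fun t ht i => (hy' t ht.1 i).mono (Ici_subset_Ici.2 ht.1))
    (fun t ht => hHess t ht.1) (fun t ht => hK t (Ico_subset_Icc_self ht)) hinit
  have hgronwall := exp_integral_mul_le_of_hasDerivAt hT (funext hhlow ▸ continuousOn_iInf_colSum hA)
    (N := fun t => ∑ i, y t i) (continuousOn_finsetSum _ fun i _ => hy i)
    (fun t ht => HasDerivAt.fun_sum fun i _ => (hy' t ht.1.le i).hasDerivAt (Ici_mem_nhds ht.1))
    (fun t ht => by
      rw [hhlow]
      exact (A t).iInf_colSum_mul_sum_le_sum_mulVec (hy_nonneg t (Ioo_subset_Icc_self ht)))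
  have habs : ∀ t ∈ Icc 0 T, ∑ i, |y t i| = ∑ i, y t i := fun t ht =>
    Finset.sum_congr rfl fun i _ => abs_of_nonneg (hy_nonneg t ht i)
  show Real.exp _ * ∑ i, |y 0 i| ≤ ∑ i, |y T i|
  rw [habs 0 (left_mem_Icc.2 hT), habs T (right_mem_Icc.2 hT)]
  exact hgronwall

/-- Theorem 1 (lower bound): if `z*` and `z**` both solve
`z' = B(t)z + f(t)` on `[0,∞)`, `D` is invertible with nonnegative entries,
`D B(t) D⁻¹` is essentially nonnegative, and `D(z*(0) − z**(0)) ≥ 0`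
componentwise, then
`‖D(z*(t) − z**(t))‖₁ ≥ exp(∫₀ᵗ h₋(τ) dτ) ‖D(z*(0) − z**(0))‖₁`,
where `h₋(t)` is the smallest column sum of `D B(t) D⁻¹`. -/
theorem theorem_one_lower_bound
    (S : ℕ) (hS : 1 ≤ S)
    (B : ℝ → Matrix (Fin S) (Fin S) ℝ) (f : ℝ → Fin S → ℝ)
    (hBcont : ∀ i j, ContinuousOn (fun t => B t i j) (Ici (0 : ℝ)))
    (hfcont : ∀ i, ContinuousOn (fun t => f t i) (Ici (0 : ℝ)))
    (z₁ z₂ : ℝ → Fin S → ℝ)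
    (hz₁ : ∀ t ∈ Ici (0 : ℝ), ∀ i,
      HasDerivWithinAt (fun s => z₁ s i) ((B t).mulVec (z₁ t) i + f t i) (Ici 0) t)
    (hz₂ : ∀ t ∈ Ici (0 : ℝ), ∀ i,
      HasDerivWithinAt (fun s => z₂ s i) ((B t).mulVec (z₂ t) i + f t i) (Ici 0) t)
    (D : Matrix (Fin S) (Fin S) ℝ)
    (hDinv : IsUnit D.det)
    (hDnonneg : ∀ i j, 0 ≤ D i j)
    (hHess : ∀ t ∈ Ici (0 : ℝ), ∀ i j, i ≠ j → 0 ≤ (D * B t * D⁻¹) i j)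
    (hlow : ℝ → ℝ)
    (hhlow : ∀ t, hlow t = ⨅ j, ∑ i, (D * B t * D⁻¹) i j)
    (hinit : ∀ i, 0 ≤ D.mulVec (z₁ 0 - z₂ 0) i) :
    ∀ t ∈ Ici (0 : ℝ),
      Real.exp (∫ τ in (0 : ℝ)..t, hlow τ) * ∑ i, |D.mulVec (z₁ 0 - z₂ 0) i| ≤
        ∑ i, |D.mulVec (z₁ t - z₂ t) i| :=
  theorem_one_lower_bound_general S hS B f hBcont z₁ z₂ hz₁ hz₂ D hDinv hHess hlow hhlow hinit
end

section
/- (Weak ergodicity criterion.) Let S ≥ 1, let B : [0,∞) → M_S(ℝ) and f : [0,∞) → ℝ^S be continuous, and let z*, z** : [0,∞) → ℝ^S be differentiable with (z*)'(t) = B(t)z*(t) + f(t) and (z**)'(t) = B(t)z**(t) + f(t) for all t ≥ 0. Let D be an invertible S×S real matrix with nonnegative entries such that there exists d > 0 with ‖Dz‖₁ ≥ d‖z‖₁ for all z ∈ ℝ^S, and such that D B(t) D⁻¹ is essentially nonnegative for every t ≥ 0. Set β^*(t) = −max_{1≤j≤S} ∑_{i=1}^S (D B(t) D⁻¹)_{ij}.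 Then ‖z*(t) − z**(t)‖₁ ≤ (1/d) · exp(−∫₀ᵗ β^*(τ) dτ) · ‖D(z*(0) − z**(0))‖₁ for all t ≥ 0; in particular, if ∫₀^∞ β^*(t) dt = +∞, then ‖z*(t) − z**(t)‖₁ → 0 as t → ∞. -/
/-!
Set `w = D (z* - z**)`. It solves the homogeneous system `w' = H(t) w` with `H = D B D⁻¹`
essentially nonnegative. The ℓ¹ norm `φ = ∑ |wᵢ|` has a right derivative of the form
`∑ sᵢ (H w)ᵢ` with `sᵢ wᵢ = |wᵢ|` and `|sᵢ| ≤ 1`; since the off-diagonal entries of `H` are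
nonnegative, this is at most `∑ⱼ (∑ᵢ Hᵢⱼ) |wⱼ| ≤ -β*(t) φ(t)`. A Grönwall comparison for right
derivatives gives `φ(t) ≤ exp (-∫₀ᵗ β*) φ(0)`, and `‖D z‖₁ ≥ d ‖z‖₁` transfers this bound back
to `z* - z**`.
-/

open Set Filter Topology Matrix

theorem HasDerivWithinAt.abs_Ici_of_eq_zero {g : ℝ → ℝ} {g' x : ℝ}
    (hg : HasDerivWithinAt g g' (Ici x) x) (hx : g x = 0) :
    HasDerivWithinAt (fun y => |g y|) |g'| (Ici x) x := by
  rw [← hasDerivWithinAt_Ioi_iff_Ici, hasDerivWithinAt_iff_tendsto_slope' self_notMem_Ioi]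
    at hg ⊢
  refine ((continuous_abs.tendsto g').comp hg).congr' ?_
  filter_upwards [self_mem_nhdsWithin] with y (hy : x < y)
  rw [Function.comp_apply, slope_def_field, slope_def_field, hx, sub_zero, abs_zero, sub_zero,
    abs_div, abs_of_pos (sub_pos.2 hy)]

theorem HasDerivWithinAt.exists_abs_Ici {g : ℝ → ℝ} {g' x : ℝ}
    (hg : HasDerivWithinAt g g' (Ici x) x) :
    ∃ s : ℝ, |s| ≤ 1 ∧ s * g x = |g x| ∧
      HasDerivWithinAt (fun y => |g y|) (s * g') (Ici x) x := by
  rcases lt_trichotomy (g x) 0 with hneg | hzero | hpos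
  · have hev : (fun y => |g y|) =ᶠ[𝓝[Ici x] x] fun y => -g y :=
      (hg.continuousWithinAt.eventually (gt_mem_nhds hneg)).mono fun y hy => abs_of_neg hy
    refine ⟨-1, by norm_num, by rw [abs_of_neg hneg]; ring, ?_⟩
    simpa using hg.neg.congr_of_eventuallyEq hev (abs_of_neg hneg)
  · refine ⟨SignType.sign g', ?_, by simp [hzero], ?_⟩
    · rcases SignType.sign g' with _ | _ | _ <;> simp
    · simpa [sign_mul_self] using hg.abs_Ici_of_eq_zero hzero
  · have hev : (fun y => |g y|) =ᶠ[𝓝[Ici x] x] g :=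
      (hg.continuousWithinAt.eventually (lt_mem_nhds hpos)).mono fun y hy => abs_of_pos hy
    exact ⟨1, by norm_num, by rw [abs_of_pos hpos, one_mul],
      by simpa using hg.congr_of_eventuallyEq hev (abs_of_pos hpos)⟩

theorem Matrix.mul_mulVec_apply_le_sum_mul_abs {ι : Type*} [Fintype ι] {H : Matrix ι ι ℝ}
    (hH : ∀ i j, i ≠ j → 0 ≤ H i j) {w : ι → ℝ} {s : ℝ} {i : ι} (hs : |s| ≤ 1)
    (hsw : s * w i = |w i|) :
    s * (H *ᵥ w) i ≤ ∑ j, H i j * |w j| := by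
  rw [mulVec, dotProduct, Finset.mul_sum]
  refine Finset.sum_le_sum fun j _ => ?_
  rcases eq_or_ne i j with rfl | hij
  · rw [mul_left_comm, hsw]
  · have hswj : s * w j ≤ |w j| :=
      (le_abs_self _).trans (by rw [abs_mul]; exact mul_le_of_le_one_left (abs_nonneg _) hs)
    calc s * (H i j * w j) = H i j * (s * w j) := by ring
      _ ≤ H i j * |w j| := mul_le_mul_of_nonneg_left hswj (hH i j hij)

theorem Matrix.sum_sum_mul_abs_le_iSup_sum_mul {ι : Type*} [Fintype ι] (H : Matrix ι ι ℝ)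
    (w : ι → ℝ) :
    ∑ i, ∑ j, H i j * |w j| ≤ (⨆ j, ∑ i, H i j) * ∑ j, |w j| := by
  rw [Finset.sum_comm, Finset.mul_sum]
  refine Finset.sum_le_sum fun j _ => ?_
  rw [← Finset.sum_mul]
  exact mul_le_mul_of_nonneg_right (le_ciSup (Finite.bddAbove_range (fun j => ∑ i, H i j)) j)
    (abs_nonneg _)

theorem exists_hasDerivWithinAt_sum_abs_le {ι : Type*} [Fintype ι] {w : ℝ → ι → ℝ}
    {H : Matrix ι ι ℝ} {x : ℝ}
    (hw : ∀ i, HasDerivWithinAt (fun y => w y i) ((H *ᵥ w x) i) (Ici x) x)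
    (hH : ∀ i j, i ≠ j → 0 ≤ H i j) :
    ∃ φ', HasDerivWithinAt (fun y => ∑ i, |w y i|) φ' (Ici x) x ∧
      φ' ≤ (⨆ j, ∑ i, H i j) * ∑ i, |w x i| := by
  choose s hs hsw hderiv using fun i => (hw i).exists_abs_Ici
  refine ⟨_, HasDerivWithinAt.fun_sum fun i _ => hderiv i, ?_⟩
  calc ∑ i, s i * (H *ᵥ w x) i ≤ ∑ i, ∑ j, H i j * |w x j| :=
        Finset.sum_le_sum fun i _ => H.mul_mulVec_apply_le_sum_mul_abs hH (hs i) (hsw i)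
    _ ≤ _ := H.sum_sum_mul_abs_le_iSup_sum_mul (w x)

theorem le_exp_neg_integral_mul_of_hasDerivWithinAt_le {φ β : ℝ → ℝ} {a t : ℝ}
    (hφ : ContinuousOn φ (Ici a)) (hβ : ContinuousOn β (Ici a))
    (hφ' : ∀ x ∈ Ici a, ∃ φ', HasDerivWithinAt φ φ' (Ici x) x ∧ φ' ≤ -β x * φ x) (ht : a ≤ t) :
    φ t ≤ Real.exp (-∫ τ in a..t, β τ) * φ a := by
  set I : ℝ → ℝ := fun u => ∫ τ in a..u, β τ
  have hI : ∀ x ∈ Ici a, HasDerivWithinAt I (β x) (Ici x) x := fun x hx =>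
    have hsub : Ioi x ⊆ Ici a := Ioi_subset_Ici hx
    intervalIntegral.integral_hasDerivWithinAt_right
      ((hβ.mono (by rw [uIcc_of_le hx]; exact Icc_subset_Ici_self)).intervalIntegrable)
      ((hβ.mono hsub).stronglyMeasurableAtFilter_nhdsWithin measurableSet_Ioi x)
      ((hβ x hx).mono hsub)
  have hβt : IntervalIntegrable β MeasureTheory.volume a t :=
    (hβ.mono (by rw [uIcc_of_le ht]; exact Icc_subset_Ici_self)).intervalIntegrable
  have hIcont : ContinuousOn I (Icc a t) := by
    simpa only [uIcc_of_le ht] using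
      intervalIntegral.continuousOn_primitive_interval' hβt left_mem_uIcc
  -- `ψ = exp (∫ β) * φ` has nonpositive right derivative, hence does not increase.
  set ψ : ℝ → ℝ := fun u => Real.exp (I u) * φ u with hψ_def
  have hψ_slope : ∀ x ∈ Ico a t, ∀ r, (0 : ℝ) < r → ∃ᶠ z in 𝓝[>] x, slope ψ x z < r := by
    intro x hx r hr
    obtain ⟨φ'x, hderiv, hle⟩ := hφ' x hx.1
    refine (((hI x hx.1).exp).mul hderiv).liminf_right_slope_le (lt_of_le_of_lt ?_ hr)
    have : β x * φ x + φ'x ≤ 0 := by linarith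
    nlinarith [Real.exp_pos (I x)]
  have hψt : ψ t ≤ ψ a :=
    image_le_of_liminf_slope_right_le_deriv_boundary (f := ψ) (B := fun _ => ψ a)
      ((Real.continuous_exp.comp_continuousOn hIcont).mul (hφ.mono Icc_subset_Ici_self))
      le_rfl continuousOn_const (fun x _ => hasDerivWithinAt_const x _ (ψ a)) hψ_slope
      (right_mem_Icc.2 ht)
  calc φ t = Real.exp (-I t) * ψ t := by rw [hψ_def, ← mul_assoc, ← Real.exp_add]; simp
    _ ≤ Real.exp (-I t) * ψ a := mul_le_mul_of_nonneg_left hψt (Real.exp_pos _).le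
    _ = Real.exp (-I t) * φ a := by simp [hψ_def, I]

theorem sum_abs_le_exp_neg_integral_mul_of_offDiag_nonneg {ι : Type*} [Fintype ι]
    {w : ℝ → ι → ℝ} {H : ℝ → Matrix ι ι ℝ} {β : ℝ → ℝ} {a t : ℝ}
    (hw : ∀ x ∈ Ici a, HasDerivWithinAt w (H x *ᵥ w x) (Ici a) x)
    (hH : ∀ x ∈ Ici a, ∀ i j, i ≠ j → 0 ≤ H x i j) (hβ : ContinuousOn β (Ici a))
    (hβH : ∀ x ∈ Ici a, ⨆ j, ∑ i, H x i j ≤ -β x) (ht : a ≤ t) :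
    ∑ i, |w t i| ≤ Real.exp (-∫ τ in a..t, β τ) * ∑ i, |w a i| := by
  have hwcont : ContinuousOn w (Ici a) := fun x hx => (hw x hx).continuousWithinAt
  refine le_exp_neg_integral_mul_of_hasDerivWithinAt_le
    (continuousOn_finsetSum _ fun i _ => ((continuous_apply i).comp_continuousOn hwcont).abs)
    hβ (fun x hx => ?_) ht
  obtain ⟨φ', hderiv, hle⟩ := exists_hasDerivWithinAt_sum_abs_le
    (hasDerivWithinAt_pi.1 ((hw x hx).mono (Ici_subset_Ici.2 hx))) (hH x hx)
  exact ⟨φ', hderiv, hle.trans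
    (mul_le_mul_of_nonneg_right (hβH x hx) (Finset.sum_nonneg fun i _ => abs_nonneg _))⟩

theorem HasDerivWithinAt.sub_of_mulVec_add {ι : Type*} [Fintype ι] {z₁ z₂ : ℝ → ι → ℝ}
    {A : Matrix ι ι ℝ} {b : ι → ℝ} {s : Set ℝ} {x : ℝ}
    (h₁ : HasDerivWithinAt z₁ (A *ᵥ z₁ x + b) s x)
    (h₂ : HasDerivWithinAt z₂ (A *ᵥ z₂ x + b) s x) :
    HasDerivWithinAt (z₁ - z₂) (A *ᵥ (z₁ - z₂) x) s x :=
  (h₁.sub h₂).congr_deriv (by rw [Pi.sub_apply, mulVec_sub]; abel)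

theorem HasDerivWithinAt.mulVec_conj {ι : Type*} [Fintype ι] [DecidableEq ι]
    {v : ℝ → ι → ℝ} {B D : Matrix ι ι ℝ} {s : Set ℝ} {x : ℝ} (hD : IsUnit D.det)
    (hv : HasDerivWithinAt v (B *ᵥ v x) s x) :
    HasDerivWithinAt (fun y => D *ᵥ v y) ((D * B * D⁻¹) *ᵥ (D *ᵥ v x)) s x := by
  rw [mulVec_mulVec, Matrix.mul_assoc, nonsing_inv_mul D hD, Matrix.mul_one, ← mulVec_mulVec]
  exact (mulVecLin D).toContinuousLinearMap.hasFDerivAt.comp_hasDerivWithinAt x hv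

theorem ContinuousOn.iSup_of_finite {X α ι : Type*} [TopologicalSpace X]
    [ConditionallyCompleteLinearOrder α] [TopologicalSpace α] [OrderTopology α] [Finite ι]
    {g : ι → X → α} {s : Set X} (hg : ∀ i, ContinuousOn (g i) s) :
    ContinuousOn (fun x => ⨆ i, g i x) s := by
  cases nonempty_fintype ι
  rcases isEmpty_or_nonempty ι with hι | hι
  · simp only [iSup_of_empty']
    exact continuousOn_const
  · simp_rw [← Finset.sup'_univ_eq_ciSup]
    exact ContinuousOn.finset_sup'_apply Finset.univ_nonempty fun i _ => hg i

theorem weak_ergodicity_criterion_general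
    (S : ℕ)
    (B : ℝ → Matrix (Fin S) (Fin S) ℝ) (f : ℝ → Fin S → ℝ)
    (hBcont : ∀ i j, ContinuousOn (fun t => B t i j) (Ici (0 : ℝ)))
    (z₁ z₂ : ℝ → Fin S → ℝ)
    (hz₁ : ∀ t ∈ Ici (0 : ℝ), ∀ i,
      HasDerivWithinAt (fun s => z₁ s i) ((B t).mulVec (z₁ t) i + f t i) (Ici 0) t)
    (hz₂ : ∀ t ∈ Ici (0 : ℝ), ∀ i,
      HasDerivWithinAt (fun s => z₂ s i) ((B t).mulVec (z₂ t) i + f t i) (Ici 0) t)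
    (D : Matrix (Fin S) (Fin S) ℝ)
    (hDinv : IsUnit D.det)
    (d : ℝ) (hd : 0 < d)
    (hDbelow : ∀ z : Fin S → ℝ, d * ∑ i, |z i| ≤ ∑ i, |D.mulVec z i|)
    (hHess : ∀ t ∈ Ici (0 : ℝ), ∀ i j, i ≠ j → 0 ≤ (D * B t * D⁻¹) i j)
    (bstar : ℝ → ℝ)
    (hbstar : ∀ t, bstar t = -(⨆ j, ∑ i, (D * B t * D⁻¹) i j)) :
    (∀ t ∈ Ici (0 : ℝ),
      ∑ i, |z₁ t i - z₂ t i| ≤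
        (1 / d) * Real.exp (-∫ τ in (0 : ℝ)..t, bstar τ) *
          ∑ i, |D.mulVec (z₁ 0 - z₂ 0) i|) ∧
    (Tendsto (fun T => ∫ τ in (0 : ℝ)..T, bstar τ) atTop atTop →
      Tendsto (fun t => ∑ i, |z₁ t i - z₂ t i|) atTop (nhds 0)) := by
  set H : ℝ → Matrix (Fin S) (Fin S) ℝ := fun t => D * B t * D⁻¹
  have hw : ∀ t ∈ Ici (0 : ℝ),
      HasDerivWithinAt (fun s => D *ᵥ (z₁ - z₂) s) (H t *ᵥ (D *ᵥ (z₁ - z₂) t)) (Ici 0) t :=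
    fun t ht => ((hasDerivWithinAt_pi.2 (hz₁ t ht)).sub_of_mulVec_add
      (hasDerivWithinAt_pi.2 (hz₂ t ht))).mulVec_conj hDinv
  have hH : ContinuousOn H (Ici 0) :=
    ((continuous_const.matrix_mul continuous_id).matrix_mul continuous_const).comp_continuousOn
      (continuousOn_pi.2 fun i => continuousOn_pi.2 (hBcont i))
  have hbstar_cont : ContinuousOn bstar (Ici 0) := by
    rw [funext hbstar]
    exact (ContinuousOn.iSup_of_finite fun j => continuousOn_finsetSum _ fun i _ =>
      (continuous_apply j).comp_continuousOn ((continuous_apply i).comp_continuousOn hH)).neg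
  have hdecay : ∀ t ∈ Ici (0 : ℝ), ∑ i, |(D *ᵥ (z₁ - z₂) t) i| ≤
      Real.exp (-∫ τ in (0 : ℝ)..t, bstar τ) * ∑ i, |D.mulVec (z₁ 0 - z₂ 0) i| :=
    fun t ht => sum_abs_le_exp_neg_integral_mul_of_offDiag_nonneg hw hHess hbstar_cont
      (fun x _ => by rw [hbstar, neg_neg]) ht
  have hbound : ∀ t ∈ Ici (0 : ℝ), ∑ i, |z₁ t i - z₂ t i| ≤
      (1 / d) * Real.exp (-∫ τ in (0 : ℝ)..t, bstar τ) * ∑ i, |D.mulVec (z₁ 0 - z₂ 0) i| := by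
    intro t ht
    rw [mul_assoc, one_div, le_inv_mul_iff₀ hd]
    exact (hDbelow _).trans (hdecay t ht)
  refine ⟨hbound, fun hI => squeeze_zero'
    (Eventually.of_forall fun t => Finset.sum_nonneg fun i _ => abs_nonneg _)
    ((eventually_ge_atTop 0).mono hbound) ?_⟩
  simpa using ((Real.tendsto_exp_atBot.comp (tendsto_neg_atTop_atBot.comp hI)).const_mul
    (1 / d)).mul_const (∑ i, |D.mulVec (z₁ 0 - z₂ 0) i|)

/-- Weak ergodicity criterion: if `z*` and `z**` both solve `z' = B(t)z + f(t)`
on `[0,∞)`, `D` is invertible with nonnegative entries, `‖Dz‖₁ ≥ d‖z‖₁` for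
some `d > 0`, and `D B(t) D⁻¹` is essentially nonnegative, then with
`β*(t) = −max_j ∑ᵢ (D B(t) D⁻¹)ᵢⱼ` one has
`‖z*(t) − z**(t)‖₁ ≤ (1/d) exp(−∫₀ᵗ β*(τ) dτ) ‖D(z*(0) − z**(0))‖₁`;
in particular if `∫₀^∞ β*(t) dt = +∞` then `‖z*(t) − z**(t)‖₁ → 0`. -/
theorem weak_ergodicity_criterion
    (S : ℕ) (hS : 1 ≤ S)
    (B : ℝ → Matrix (Fin S) (Fin S) ℝ) (f : ℝ → Fin S → ℝ)
    (hBcont : ∀ i j, ContinuousOn (fun t => B t i j) (Ici (0 : ℝ)))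
    (hfcont : ∀ i, ContinuousOn (fun t => f t i) (Ici (0 : ℝ)))
    (z₁ z₂ : ℝ → Fin S → ℝ)
    (hz₁ : ∀ t ∈ Ici (0 : ℝ), ∀ i,
      HasDerivWithinAt (fun s => z₁ s i) ((B t).mulVec (z₁ t) i + f t i) (Ici 0) t)
    (hz₂ : ∀ t ∈ Ici (0 : ℝ), ∀ i,
      HasDerivWithinAt (fun s => z₂ s i) ((B t).mulVec (z₂ t) i + f t i) (Ici 0) t)
    (D : Matrix (Fin S) (Fin S) ℝ)
    (hDinv : IsUnit D.det)
    (hDnonneg : ∀ i j, 0 ≤ D i j)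
    (d : ℝ) (hd : 0 < d)
    (hDbelow : ∀ z : Fin S → ℝ, d * ∑ i, |z i| ≤ ∑ i, |D.mulVec z i|)
    (hHess : ∀ t ∈ Ici (0 : ℝ), ∀ i j, i ≠ j → 0 ≤ (D * B t * D⁻¹) i j)
    (bstar : ℝ → ℝ)
    (hbstar : ∀ t, bstar t = -(⨆ j, ∑ i, (D * B t * D⁻¹) i j)) :
    (∀ t ∈ Ici (0 : ℝ),
      ∑ i, |z₁ t i - z₂ t i| ≤
        (1 / d) * Real.exp (-∫ τ in (0 : ℝ)..t, bstar τ) *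
          ∑ i, |D.mulVec (z₁ 0 - z₂ 0) i|) ∧
    (Tendsto (fun T => ∫ τ in (0 : ℝ)..T, bstar τ) atTop atTop →
      Tendsto (fun t => ∑ i, |z₁ t i - z₂ t i|) atTop (nhds 0)) :=
  weak_ergodicity_criterion_general S B f hBcont z₁ z₂ hz₁ hz₂ D hDinv d hd hDbelow hHess bstar
    hbstar
end

section
/- (Tridiagonal form of the transformed matrix for a pure birth–death process.) In the BDCP setting with all catastrophe rates ξ_k ≡ 0, the matrix H(t) := D B(t) D⁻¹ is tridiagonal with entries H(t)_{kk} = −(λ_{k−1}(t) + μ_k(t)) for 1 ≤ k ≤ S, H(t)_{k,k+1} = (d_k/d_{k+1}) μ_k(t) for 1 ≤ k ≤ S−1, H(t)_{k+1,k} = (d_{k+1}/d_k) λ_k(t) for 1 ≤ k ≤ S−1, and H(t)_{ij} = 0 whenever |i − j| ≥ 2. In particular, H(t) is essentially nonnegative for every t ≥ 0 and every choice of positive d_1,…,d_S. -/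
open Set

/-- The reduced matrix `B(t)` of a finite birth–death–catastrophe process
(see the paper, Section 4; 1-based indices `1,…,S` encoded by `i : Fin S ↦ i+1`). -/
def bdcpB (S : ℕ) (lam mu xi : ℕ → ℝ → ℝ) (t : ℝ) : Matrix (Fin S) (Fin S) ℝ :=
  fun i j =>
    (if (i : ℕ) = (j : ℕ) + 1 then lam (i : ℕ) t
     else if (j : ℕ) = (i : ℕ) + 1 then mu ((i : ℕ) + 2) t
     else if i = j then -(lam ((i : ℕ) + 1) t + mu ((i : ℕ) + 1) t + xi ((i : ℕ) + 1) t)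
     else 0)
    - (if (i : ℕ) = 0 then lam 0 t else 0)

/-- The upper-triangular matrix `D` with `D_{kj} = d_k` for `j ≥ k`. -/
def triD (S : ℕ) (d : ℕ → ℝ) : Matrix (Fin S) (Fin S) ℝ :=
  fun i j => if i ≤ j then d ((i : ℕ) + 1) else 0

noncomputable def Emat (S : ℕ) (d : ℕ → ℝ) : Matrix (Fin S) (Fin S) ℝ :=
  fun i j => if (i : ℕ) = (j : ℕ) then (d ((j : ℕ) + 1))⁻¹
    else if (i : ℕ) + 1 = (j : ℕ) then -(d ((j : ℕ) + 1))⁻¹ else 0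

noncomputable def Hmat (S : ℕ) (lam mu : ℕ → ℝ → ℝ) (d : ℕ → ℝ) (t : ℝ) :
    Matrix (Fin S) (Fin S) ℝ :=
  fun i j =>
    if (i : ℕ) = (j : ℕ) then -(lam (i : ℕ) t + mu ((i : ℕ) + 1) t)
    else if (j : ℕ) = (i : ℕ) + 1 then d ((i : ℕ) + 1) / d ((j : ℕ) + 1) * mu ((i : ℕ) + 1) t
    else if (i : ℕ) = (j : ℕ) + 1 then d ((i : ℕ) + 1) / d ((j : ℕ) + 1) * lam ((j : ℕ) + 1) t
    else 0

lemma sum_fin_ite {S : ℕ} (m : ℕ) (g : Fin S → ℝ) :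
    ∑ l : Fin S, (if (l : ℕ) = m then g l else 0) = if h : m < S then g ⟨m, h⟩ else 0 := by
  split_ifs with h
  · rw [Finset.sum_eq_single (⟨m, h⟩ : Fin S)]
    · simp
    · intro b _ hb
      simp [Fin.ext_iff] at hb ⊢
      intro hbm; exact absurd hbm hb
    · simp
  · apply Finset.sum_eq_zero
    intro l _
    have := l.isLt
    rw [if_neg]; omega

lemma triD_mul_Emat {S : ℕ} (d : ℕ → ℝ) (hd : ∀ k, 1 ≤ k → k ≤ S → d k ≠ 0) :
    triD S d * Emat S d = 1 := by
  ext i j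
  rw [Matrix.mul_apply]
  have hsplit : ∀ l : Fin S, triD S d i l * Emat S d l j =
      (if (l : ℕ) = (j : ℕ) then (if i ≤ l then d ((i:ℕ)+1) else 0) * (d ((j:ℕ)+1))⁻¹ else 0)
      + (if (l : ℕ) = (j : ℕ) - 1 then
          (if (j:ℕ) = 0 then 0 else (if i ≤ l then d ((i:ℕ)+1) else 0) * (-(d ((j:ℕ)+1))⁻¹)) else 0) := by
    intro l
    simp only [triD, Emat]
    split_ifs <;> ring_nf <;> omega
  rw [Finset.sum_congr rfl (fun l _ => hsplit l), Finset.sum_add_distrib,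
    sum_fin_ite, sum_fin_ite]
  have hj := j.isLt
  rw [dif_pos hj, dif_pos (by omega : (j:ℕ) - 1 < S)]
  simp only [Fin.le_def]
  by_cases hij : (i:ℕ) = (j:ℕ)
  · rcases Nat.eq_zero_or_pos (j:ℕ) with h0 | h0
    · rw [if_pos (by omega), if_pos h0]
      rw [hij, mul_inv_cancel₀ (hd ((j:ℕ)+1) (by omega) (by omega))]
      simp [Matrix.one_apply, Fin.ext_iff, hij]
    · rw [if_pos (by omega), if_neg (by omega), if_neg (by omega)]
      rw [hij, mul_inv_cancel₀ (hd ((j:ℕ)+1) (by omega) (by omega))]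
      simp [Matrix.one_apply, Fin.ext_iff, hij]
  · by_cases hlt : (i:ℕ) < (j:ℕ)
    · rw [if_pos (by omega), if_neg (by omega), if_pos (by omega)]
      rw [Matrix.one_apply_ne (by simp [Fin.ext_iff]; omega)]
      ring
    · rw [if_neg (by omega)]
      rw [Matrix.one_apply_ne (by simp [Fin.ext_iff]; omega)]
      rcases Nat.eq_zero_or_pos (j:ℕ) with h0 | h0
      · rw [if_pos h0]; ring
      · rw [if_neg (by omega), if_neg (by omega)]; ring

set_option maxHeartbeats 1000000 in
lemma final_calc (S i j : ℕ) (hiS : i < S) (hjS : j < S)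
    (lj l0 li li' mj mi mj' di : ℝ)
    (e1 : i = j → mi = mj) (e2 : i = j + 1 → li = lj)
    (e3 : 1 ≤ j → mj' = mj) (e4 : j + 1 = S → lj = 0)
    (e5 : 1 ≤ i → li' = li) (e6 : i = 0 → li = l0) :
    (((if _h : j + 1 < S then (if i ≤ j + 1 then di else 0) * lj else 0)
      + (if _h : j - 1 < S then (if j = 0 then 0 else (if i ≤ j - 1 then di else 0) * mj') else 0))
      + (if _h : j < S then (if i ≤ j then di else 0) * (-(lj + mj)) else 0))
      + (if _h : 0 < S then (if i ≤ 0 then di else 0) * (-l0) else 0)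
    =
    ((if _h : i < S then (-(li + mi)) * (if i ≤ j then di else 0) else 0)
      + (if _h : i + 1 < S then di * mi * (if i + 1 ≤ j then 1 else 0) else 0))
      + (if _h : i - 1 < S then (if i = 0 then 0 else di * li' * (if i - 1 ≤ j then 1 else 0)) else 0) := by
  have h0S : 0 < S := by omega
  rw [dif_pos hjS, dif_pos (show j - 1 < S by omega), dif_pos h0S, dif_pos hiS,
    dif_pos (show i - 1 < S by omega)]
  by_cases hij : i = j
  · simp only [eq_true (show i ≤ j + 1 by omega), eq_false (show ¬(i + 1 ≤ j) by omega),
      eq_true (show i ≤ j by omega), eq_true (show i - 1 ≤ j by omega), if_true, if_false]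
    split_ifs <;>
      first
        | (exfalso; omega)
        | ((try rw [e4 (by omega)]); (try rw [e3 (by omega)]); (try rw [e5 (by omega)]);
           (try rw [e6 (by omega)]); (try rw [e2 (by omega)]); (try rw [e1 (by omega)]); ring1)
  · by_cases h2 : i = j + 1
    · simp only [eq_true (show i ≤ j + 1 by omega), eq_false (show ¬(i ≤ j - 1) by omega),
        eq_false (show ¬(i ≤ j) by omega), eq_false (show ¬(i ≤ 0) by omega),
        eq_false (show ¬(i + 1 ≤ j) by omega), eq_true (show i - 1 ≤ j by omega),
        eq_false (show ¬(i = 0) by omega), if_true, if_false]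
      split_ifs <;>
        first
          | (exfalso; omega)
          | ((try rw [e4 (by omega)]); (try rw [e3 (by omega)]); (try rw [e5 (by omega)]);
             (try rw [e6 (by omega)]); (try rw [e2 (by omega)]); (try rw [e1 (by omega)]); ring1)
    · by_cases h3 : j = i + 1
      · simp only [eq_true (show i ≤ j + 1 by omega), eq_true (show i ≤ j - 1 by omega),
          eq_true (show i ≤ j by omega), eq_true (show i + 1 ≤ j by omega),
          eq_true (show i - 1 ≤ j by omega), eq_false (show ¬(j = 0) by omega),
          if_true, if_false]
        split_ifs <;>
          first
            | (exfalso; omega)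
            | ((try rw [e4 (by omega)]); (try rw [e3 (by omega)]); (try rw [e5 (by omega)]);
               (try rw [e6 (by omega)]); (try rw [e2 (by omega)]); (try rw [e1 (by omega)]); ring1)
      · by_cases hlt : i < j
        · simp only [eq_true (show i ≤ j + 1 by omega), eq_true (show i ≤ j - 1 by omega),
            eq_true (show i ≤ j by omega), eq_true (show i + 1 ≤ j by omega),
            eq_true (show i - 1 ≤ j by omega), eq_false (show ¬(j = 0) by omega),
            if_true, if_false]
          split_ifs <;>
            first
              | (exfalso; omega)
              | ((try rw [e4 (by omega)]); (try rw [e3 (by omega)]); (try rw [e5 (by omega)]);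
                 (try rw [e6 (by omega)]); (try rw [e2 (by omega)]); (try rw [e1 (by omega)]); ring1)
        · simp only [eq_false (show ¬(i ≤ j + 1) by omega), eq_false (show ¬(i ≤ j - 1) by omega),
            eq_false (show ¬(i ≤ j) by omega), eq_false (show ¬(i ≤ 0) by omega),
            eq_false (show ¬(i + 1 ≤ j) by omega), eq_false (show ¬(i - 1 ≤ j) by omega),
            eq_false (show ¬(i = 0) by omega), if_true, if_false]
          split_ifs <;>
            first
              | (exfalso; omega)
              | ((try rw [e4 (by omega)]); (try rw [e3 (by omega)]); (try rw [e5 (by omega)]);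
                 (try rw [e6 (by omega)]); (try rw [e2 (by omega)]); (try rw [e1 (by omega)]); ring1)

set_option maxHeartbeats 1000000 in
lemma key {S : ℕ} (lam mu : ℕ → ℝ → ℝ) (d : ℕ → ℝ) (t : ℝ)
    (hlamS : lam S t = 0) (hd : ∀ k, 1 ≤ k → k ≤ S → d k ≠ 0) :
    triD S d * bdcpB S lam mu (fun _ _ => 0) t = Hmat S lam mu d t * triD S d := by
  ext i j
  rw [Matrix.mul_apply, Matrix.mul_apply]
  have hsplitL : ∀ l : Fin S, triD S d i l * bdcpB S lam mu (fun _ _ => 0) t l j =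
      (if (l : ℕ) = (j : ℕ) + 1 then
        (if (i:ℕ) ≤ (l:ℕ) then d ((i:ℕ)+1) else 0) * lam ((l:ℕ)) t else 0)
      + (if (l : ℕ) = (j : ℕ) - 1 then
        (if (j:ℕ) = 0 then 0 else
          (if (i:ℕ) ≤ (l:ℕ) then d ((i:ℕ)+1) else 0) * mu ((l:ℕ)+2) t) else 0)
      + (if (l : ℕ) = (j : ℕ) then
        (if (i:ℕ) ≤ (l:ℕ) then d ((i:ℕ)+1) else 0) * (-(lam ((l:ℕ)+1) t + mu ((l:ℕ)+1) t)) else 0)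
      + (if (l : ℕ) = 0 then
        (if (i:ℕ) ≤ (l:ℕ) then d ((i:ℕ)+1) else 0) * (-(lam 0 t)) else 0) := by
    intro l
    simp only [triD, bdcpB, Fin.le_def, Fin.ext_iff]
    split_ifs <;> first | ring1 | (exfalso; omega)
  have hsplitR : ∀ l : Fin S, Hmat S lam mu d t i l * triD S d l j =
      (if (l : ℕ) = (i : ℕ) then
        -(lam ((i:ℕ)) t + mu ((i:ℕ)+1) t) * (if (l:ℕ) ≤ (j:ℕ) then d ((l:ℕ)+1) else 0) else 0)
      + (if (l : ℕ) = (i : ℕ) + 1 then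
        d ((i:ℕ)+1) * mu ((i:ℕ)+1) t * (if (l:ℕ) ≤ (j:ℕ) then 1 else 0) else 0)
      + (if (l : ℕ) = (i : ℕ) - 1 then
        (if (i:ℕ) = 0 then 0 else
          d ((i:ℕ)+1) * lam ((l:ℕ)+1) t * (if (l:ℕ) ≤ (j:ℕ) then 1 else 0)) else 0) := by
    intro l
    have hdl : d ((l:ℕ)+1) ≠ 0 := hd _ (by omega) (by omega : (l:ℕ)+1 ≤ S)
    simp only [Hmat, triD, Fin.le_def]
    split_ifs <;>
      first | ring1 | (exfalso; omega) | (field_simp [hdl]; ring1) | field_simp [hdl]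
  rw [Finset.sum_congr rfl (fun l _ => hsplitL l), Finset.sum_congr rfl (fun l _ => hsplitR l)]
  simp only [Finset.sum_add_distrib, sum_fin_ite]
  exact final_calc S (i:ℕ) (j:ℕ) i.isLt j.isLt
    (lam ((j:ℕ)+1) t) (lam 0 t) (lam (i:ℕ) t) (lam ((i:ℕ)-1+1) t)
    (mu ((j:ℕ)+1) t) (mu ((i:ℕ)+1) t) (mu ((j:ℕ)-1+2) t) (d ((i:ℕ)+1))
    (fun h => by rw [h])
    (fun h => by rw [h])
    (fun h => by rw [show (j:ℕ) - 1 + 2 = (j:ℕ) + 1 by omega])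
    (fun h => by rw [h]; exact hlamS)
    (fun h => by rw [show (i:ℕ) - 1 + 1 = (i:ℕ) by omega])
    (fun h => by rw [h])


/-- Tridiagonal form of `H(t) = D B(t) D⁻¹` for a pure birth–death process
(all catastrophe rates `ξ ≡ 0`): `H_{kk} = −(λ_{k−1} + μ_k)`,
`H_{k,k+1} = (d_k/d_{k+1}) μ_k`, `H_{k+1,k} = (d_{k+1}/d_k) λ_k`, zero whenever
`|i − j| ≥ 2`; in particular `H(t)` is essentially nonnegative. -/
theorem bd_transformed_matrix_tridiagonal
    (S : ℕ) (hS : 1 ≤ S)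
    (lam mu : ℕ → ℝ → ℝ) (d : ℕ → ℝ)
    (hlam : ∀ k < S, ContinuousOn (lam k) (Ici 0) ∧ ∀ t ∈ Ici (0 : ℝ), 0 ≤ lam k t)
    (hmu : ∀ k, 1 ≤ k → k ≤ S →
      ContinuousOn (mu k) (Ici 0) ∧ ∀ t ∈ Ici (0 : ℝ), 0 ≤ mu k t)
    (hlamS : ∀ t, lam S t = 0) (hmu0 : ∀ t, mu 0 t = 0)
    (hd : ∀ k, 1 ≤ k → k ≤ S → 0 < d k)
    (H : ℝ → Matrix (Fin S) (Fin S) ℝ)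
    (hH : ∀ t, H t = triD S d * bdcpB S lam mu (fun _ _ => 0) t * (triD S d)⁻¹) :
    ∀ t ∈ Ici (0 : ℝ),
      (∀ i : Fin S, H t i i = -(lam (i : ℕ) t + mu ((i : ℕ) + 1) t)) ∧
      (∀ i j : Fin S, (j : ℕ) = (i : ℕ) + 1 →
        H t i j = d ((i : ℕ) + 1) / d ((j : ℕ) + 1) * mu ((i : ℕ) + 1) t) ∧
      (∀ i j : Fin S, (i : ℕ) = (j : ℕ) + 1 →
        H t i j = d ((i : ℕ) + 1) / d ((j : ℕ) + 1) * lam ((j : ℕ) + 1) t) ∧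
      (∀ i j : Fin S, (i : ℕ) + 2 ≤ (j : ℕ) ∨ (j : ℕ) + 2 ≤ (i : ℕ) → H t i j = 0) ∧
      (∀ i j : Fin S, i ≠ j → 0 ≤ H t i j) := by
  have hdne : ∀ k, 1 ≤ k → k ≤ S → d k ≠ 0 := fun k h1 h2 => (hd k h1 h2).ne'
  have hDE : triD S d * Emat S d = 1 := triD_mul_Emat d hdne
  have hinv : (triD S d)⁻¹ = Emat S d := Matrix.inv_eq_right_inv hDE
  intro t ht
  have hHt : H t = Hmat S lam mu d t := by
    rw [hH t, hinv, key lam mu d t (hlamS t) hdne, Matrix.mul_assoc, hDE, Matrix.mul_one]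
  refine ⟨?_, ?_, ?_, ?_, ?_⟩
  · intro i
    rw [hHt]; simp [Hmat]
  · intro i j hji
    rw [hHt]
    simp only [Hmat]
    rw [if_neg (by omega), if_pos hji]
  · intro i j hij
    rw [hHt]
    simp only [Hmat]
    rw [if_neg (by omega), if_neg (by omega), if_pos hij]
  · intro i j hfar
    rw [hHt]
    simp only [Hmat]
    rw [if_neg (by omega), if_neg (by omega), if_neg (by omega)]
  · intro i j hne
    have hne' : (i:ℕ) ≠ (j:ℕ) := fun h => hne (Fin.ext h)
    rw [hHt]
    simp only [Hmat]
    rw [if_neg hne']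
    split_ifs with h2 h3
    · have hi1 : (i:ℕ) + 1 ≤ S := by omega
      have hj1 : (j:ℕ) + 1 ≤ S := by omega
      exact mul_nonneg
        (div_nonneg (hd _ (by omega) hi1).le (hd _ (by omega) hj1).le)
        ((hmu ((i:ℕ)+1) (by omega) hi1).2 t ht)
    · have hjlt : (j:ℕ) + 1 < S := by have := i.isLt; omega
      exact mul_nonneg
        (div_nonneg (hd _ (by omega) (by omega)).le (hd _ (by omega) (by omega)).le)
        ((hlam ((j:ℕ)+1) hjlt).2 t ht)
    · exact le_refl _
end

section
/- (Column sums of the transformed matrix for a pure birth–death process, formula (403) with ξ ≡ 0.) In the BDCP setting with all catastrophe rates ξ_k ≡ 0, the negative column sums of H(t) := D B(t) D⁻¹ are given, for 1 ≤ k ≤ S, by −∑_{i=1}^S H(t)_{ik} = λ_{k−1}(t) + μ_k(t) − (d_{k+1}/d_k) λ_k(t) − (d_{k−1}/d_k) μ_{k−1}(t), where for k = 1 the term (d_0/d_1)μ_0 is absent (μ_0 ≡ 0) and for k = S the term (d_{S+1}/d_S)λ_S is absent (λ_S ≡ 0). -/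
/-!
Let `c := 𝟙ᵀ H(t)` be the row vector of column sums. Since `H D = D B`, we have `c D = 𝟙ᵀ D B`.
The row vector `𝟙ᵀ D` consists of the prefix sums `u_j = d_1 + ⋯ + d_j`, and as `B` is
tridiagonal up to the `-λ₀` in its first row, `(𝟙ᵀ D B)_k` telescopes (using `λ_S = 0`) to
`w_k = d_{k+1} λ_k - d_k μ_k - d_1 λ_0`. Finally `(c D)_k = ∑_{i ≤ k} c_i d_i`, so
`c_k d_k = w_k - w_{k-1}`.
-/

open Set

open Finset Matrix

theorem triD_isUpperTriangular (S : ℕ) (d : ℕ → ℝ) : (triD S d).IsUpperTriangular :=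
  fun _ _ hji => if_neg (not_le.2 hji)

theorem det_triD (S : ℕ) (d : ℕ → ℝ) : (triD S d).det = ∏ i : Fin S, d (i + 1) := by
  rw [det_of_isUpperTriangular (triD_isUpperTriangular S d)]
  simp [triD]

theorem isUnit_det_triD {S : ℕ} {d : ℕ → ℝ} (hd : ∀ i : Fin S, d (i + 1) ≠ 0) :
    IsUnit (triD S d).det := by
  rw [det_triD, isUnit_iff_ne_zero, prod_ne_zero_iff]
  exact fun i _ => hd i

theorem vecMul_triD_apply {S : ℕ} (d v : ℕ → ℝ) (k : Fin S) :
    ((fun j : Fin S => v j) ᵥ* triD S d) k = ∑ i ∈ range (k + 1), v i * d (i + 1) := by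
  simp only [vecMul, dotProduct, triD, Fin.le_def, mul_ite, mul_zero]
  rw [Fin.sum_univ_eq_sum_range (fun i => if i ≤ k then v i * d (i + 1) else 0), ← sum_filter]
  congr 1
  ext i
  simp only [mem_filter, Finset.mem_range]
  omega

theorem mul_eq_sub_of_vecMul_triD_eq {S : ℕ} {d : ℕ → ℝ} {v : Fin S → ℝ} {w : ℕ → ℝ}
    (h : v ᵥ* triD S d = fun j : Fin S => w j) (k : Fin S) :
    v k * d (k + 1) = w k - if (k : ℕ) = 0 then 0 else w (k - 1) := by
  set v' : ℕ → ℝ := fun i => if hi : i < S then v ⟨i, hi⟩ else 0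
  have hw : ∀ j : Fin S, w j = ∑ i ∈ range (j + 1), v' i * d (i + 1) := fun j => by
    rw [← congrFun h j, ← vecMul_triD_apply]
    congr
    funext i
    simp [v']
  have hv' : v' k = v k := by simp [v']
  rw [hw k, sum_range_succ, hv']
  split_ifs with hk
  · simp [hk]
  · rw [hw ⟨k - 1, by omega⟩, Nat.sub_add_cancel (by omega)]
    simp [v']

-- The guard is needed because `l - 1` truncates to `0` at `l = 0`, where column `l` of `B`
-- has no entry above the diagonal.
theorem vecMul_bdcpB_apply {S : ℕ} {lam mu : ℕ → ℝ → ℝ} (xi : ℕ → ℝ → ℝ) {t : ℝ}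
    (hlamS : lam S t = 0) (u : ℕ → ℝ) (l : Fin S) :
    ((fun j : Fin S => u j) ᵥ* bdcpB S lam mu xi t) l =
      u (l + 1) * lam (l + 1) t - u l * (lam (l + 1) t + mu (l + 1) t + xi (l + 1) t)
        + (if (l : ℕ) = 0 then 0 else u (l - 1) * mu (l + 1) t) - u 0 * lam 0 t := by
  set f : ℕ → ℝ := fun j =>
    (if j = l + 1 then u (l + 1) * lam (l + 1) t else 0)
      - (if j = l then u l * (lam (l + 1) t + mu (l + 1) t + xi (l + 1) t) else 0)
      + (if j = l - 1 then (if (l : ℕ) = 0 then 0 else u (l - 1) * mu (l + 1) t) else 0)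
      - (if j = 0 then u 0 * lam 0 t else 0)
  have entry : ∀ j : Fin S, u j * bdcpB S lam mu xi t j l = f j := by
    intro j
    simp only [f, bdcpB, ← Fin.val_inj]
    generalize (j : ℕ) = a
    generalize (l : ℕ) = b
    grind
  simp only [vecMul, dotProduct, entry]
  rw [Fin.sum_univ_eq_sum_range f]
  simp only [f, sum_add_distrib, sum_sub_distrib, sum_ite_eq', Finset.mem_range]
  have hl := l.isLt
  rw [if_pos hl, if_pos (by omega : (l : ℕ) - 1 < S), if_pos (by omega : 0 < S)]
  by_cases hlS : (l : ℕ) + 1 < S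
  · rw [if_pos hlS]
  · rw [if_neg hlS, show (l : ℕ) + 1 = S by omega, hlamS, mul_zero]

theorem one_vecMul_triD_mul_bdcpB_apply {S : ℕ} {lam mu : ℕ → ℝ → ℝ} {t : ℝ} (d : ℕ → ℝ)
    (hlamS : lam S t = 0) (l : Fin S) :
    (1 ᵥ* (triD S d * bdcpB S lam mu (fun _ _ => 0) t)) l =
      d (l + 2) * lam (l + 1) t - d (l + 1) * mu (l + 1) t - d 1 * lam 0 t := by
  set u : ℕ → ℝ := fun n => ∑ i ∈ range (n + 1), d (i + 1)
  have hu : 1 ᵥ* triD S d = fun j : Fin S => u j := by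
    funext j
    exact vecMul_triD_apply d 1 j |>.trans (by simp [u])
  rw [← vecMul_vecMul, hu, vecMul_bdcpB_apply _ hlamS]
  rcases l with ⟨_ | m, -⟩
  · simp only [u, sum_range_succ, Finset.range_zero, sum_empty, zero_add, if_pos]
    ring
  · simp only [u, sum_range_succ, Nat.add_eq_zero_iff, one_ne_zero, and_false, if_false,
      add_tsub_cancel_right]
    ring

theorem bd_transformed_matrix_column_sums_general
    (S : ℕ)
    (lam mu : ℕ → ℝ → ℝ) (d : ℕ → ℝ)
    (hlamS : ∀ t, lam S t = 0) (hmu0 : ∀ t, mu 0 t = 0)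
    (hd : ∀ k, 1 ≤ k → k ≤ S → 0 < d k)
    (H : ℝ → Matrix (Fin S) (Fin S) ℝ)
    (hH : ∀ t, H t = triD S d * bdcpB S lam mu (fun _ _ => 0) t * (triD S d)⁻¹) :
    ∀ t ∈ Ici (0 : ℝ), ∀ k : Fin S,
      -∑ i, H t i k =
        lam (k : ℕ) t + mu ((k : ℕ) + 1) t
          - d ((k : ℕ) + 2) / d ((k : ℕ) + 1) * lam ((k : ℕ) + 1) t
          - d (k : ℕ) / d ((k : ℕ) + 1) * mu (k : ℕ) t := by
  intro t _ k
  have hD : IsUnit (triD S d).det := isUnit_det_triD fun i => (hd _ (by omega) i.isLt).ne'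
  let w : ℕ → ℝ := fun n => d (n + 2) * lam (n + 1) t - d (n + 1) * mu (n + 1) t - d 1 * lam 0 t
  have hcol : (1 ᵥ* H t) ᵥ* triD S d = fun l : Fin S => w l := by
    rw [vecMul_vecMul, hH, nonsing_inv_mul_cancel_right _ _ hD]
    exact funext (one_vecMul_triD_mul_bdcpB_apply d (hlamS t))
  have hk := mul_eq_sub_of_vecMul_triD_eq hcol k
  simp only [vecMul, dotProduct, Pi.one_apply, one_mul] at hk
  have hsum : (∑ i, H t i k) * d (k + 1) = d (k + 2) * lam (k + 1) t - d (k + 1) * mu (k + 1) t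
      - d (k + 1) * lam k t + d k * mu k t := by
    rw [hk]
    rcases k with ⟨_ | m, -⟩
    · simp [w, hmu0]
    · simp only [w, Nat.add_eq_zero_iff, one_ne_zero, and_false, if_false,
        add_tsub_cancel_right]
      ring
  have hdk : d (k + 1) ≠ 0 := (hd _ (by omega) (by omega)).ne'
  field_simp
  linarith

/-- Column sums of `H(t) = D B(t) D⁻¹` for a pure birth–death process
(formula (403) of the paper with `ξ ≡ 0`): for `1 ≤ k ≤ S` (here `k = (k₀:ℕ)+1`
for `k₀ : Fin S`),
`−∑ᵢ H(t)ᵢₖ = λ_{k−1} + μ_k − (d_{k+1}/d_k) λ_k − (d_{k−1}/d_k) μ_{k−1}`;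
the boundary terms vanish since `μ₀ ≡ 0` and `λ_S ≡ 0`. -/
theorem bd_transformed_matrix_column_sums
    (S : ℕ) (hS : 1 ≤ S)
    (lam mu : ℕ → ℝ → ℝ) (d : ℕ → ℝ)
    (hlam : ∀ k < S, ContinuousOn (lam k) (Ici 0) ∧ ∀ t ∈ Ici (0 : ℝ), 0 ≤ lam k t)
    (hmu : ∀ k, 1 ≤ k → k ≤ S →
      ContinuousOn (mu k) (Ici 0) ∧ ∀ t ∈ Ici (0 : ℝ), 0 ≤ mu k t)
    (hlamS : ∀ t, lam S t = 0) (hmu0 : ∀ t, mu 0 t = 0)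
    (hd : ∀ k, 1 ≤ k → k ≤ S → 0 < d k)
    (H : ℝ → Matrix (Fin S) (Fin S) ℝ)
    (hH : ∀ t, H t = triD S d * bdcpB S lam mu (fun _ _ => 0) t * (triD S d)⁻¹) :
    ∀ t ∈ Ici (0 : ℝ), ∀ k : Fin S,
      -∑ i, H t i k =
        lam (k : ℕ) t + mu ((k : ℕ) + 1) t
          - d ((k : ℕ) + 2) / d ((k : ℕ) + 1) * lam ((k : ℕ) + 1) t
          - d (k : ℕ) / d ((k : ℕ) + 1) * mu (k : ℕ) t :=
  bd_transformed_matrix_column_sums_general S lam mu d hlamS hmu0 hd H hH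
end

section
/- (Explicit form of the transformed matrix for the SZK model.) In the SZK setting, the matrix H(t) := D B(t) D⁻¹ has entries: H(t)_{ii} = A(t)_{ii} − λ_{S−i+1}(t) for 1 ≤ i ≤ S; H(t)_{ij} = (d_i/d_j)(μ_{j−i}(t) − μ_j(t)) for i < j; and H(t)_{ij} = (d_i/d_j)(λ_{i−j}(t) − λ_{S−j+1}(t)) for i > j. In particular, if λ_{k+1}(t) ≤ λ_k(t) and μ_{k+1}(t) ≤ μ_k(t) for all 1 ≤ k ≤ S−1 and all t ≥ 0, then H(t) is essentially nonnegative for every t ≥ 0. -/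
open Set

def szkB (S : ℕ) (lam mu : ℕ → ℝ → ℝ) (t : ℝ) : Matrix (Fin S) (Fin S) ℝ :=
  fun i j =>
    (if (j : ℕ) < (i : ℕ) then lam ((i : ℕ) - (j : ℕ)) t
     else if (i : ℕ) < (j : ℕ) then mu ((j : ℕ) - (i : ℕ)) t
     else -((∑ k ∈ Finset.Icc 1 ((i : ℕ) + 1), mu k t) +
            ∑ k ∈ Finset.Icc 1 (S - ((i : ℕ) + 1)), lam k t))
    - lam ((i : ℕ) + 1) t

/-- ℕ-indexed version of the entries of `szkB`. -/
def szkF (S : ℕ) (lam mu : ℕ → ℝ → ℝ) (t : ℝ) (p q : ℕ) : ℝ :=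
  (if q < p then lam (p - q) t
   else if p < q then mu (q - p) t
   else -((∑ k ∈ Finset.Icc 1 (p + 1), mu k t) +
          ∑ k ∈ Finset.Icc 1 (S - (p + 1)), lam k t))
  - lam (p + 1) t

lemma szkF_lt (S : ℕ) (lam mu : ℕ → ℝ → ℝ) (t : ℝ) {p q : ℕ} (h : q < p) :
    szkF S lam mu t p q = lam (p - q) t - lam (p + 1) t := by
  unfold szkF; rw [if_pos h]

lemma szkF_gt (S : ℕ) (lam mu : ℕ → ℝ → ℝ) (t : ℝ) {p q : ℕ} (h : p < q) :
    szkF S lam mu t p q = mu (q - p) t - lam (p + 1) t := by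
  unfold szkF; rw [if_neg (by omega), if_pos h]

lemma szkF_diag (S : ℕ) (lam mu : ℕ → ℝ → ℝ) (t : ℝ) (p : ℕ) :
    szkF S lam mu t p p =
      -((∑ k ∈ Finset.Icc 1 (p + 1), mu k t) +
          ∑ k ∈ Finset.Icc 1 (S - (p + 1)), lam k t) - lam (p + 1) t := by
  unfold szkF; rw [if_neg (by omega), if_neg (by omega)]

lemma szkB_eq (S : ℕ) (lam mu : ℕ → ℝ → ℝ) (t : ℝ) (p q : Fin S) :
    szkB S lam mu t p q = szkF S lam mu t (p : ℕ) (q : ℕ) := rfl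

/-- The explicit inverse of `triD`. -/
noncomputable def dinvM (S : ℕ) (d : ℕ → ℝ) : Matrix (Fin S) (Fin S) ℝ :=
  fun q j => if q = j then (d ((j : ℕ) + 1))⁻¹
             else if (q : ℕ) + 1 = (j : ℕ) then -(d ((j : ℕ) + 1))⁻¹ else 0

lemma triD_apply {S : ℕ} (d : ℕ → ℝ) (i j : Fin S) :
    triD S d i j = if i ≤ j then d ((i : ℕ) + 1) else 0 := rfl

lemma dinvM_apply {S : ℕ} (d : ℕ → ℝ) (q j : Fin S) :
    dinvM S d q j = if q = j then (d ((j : ℕ) + 1))⁻¹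
      else if (q : ℕ) + 1 = (j : ℕ) then -(d ((j : ℕ) + 1))⁻¹ else 0 := rfl

lemma telescope (g : ℕ → ℝ) {a b : ℕ} (h : a ≤ b) :
    ∑ n ∈ Finset.Ico a b, (g n - g (n + 1)) = g a - g b := by
  induction b, h using Nat.le_induction with
  | base => simp
  | succ b hb ih => rw [Finset.sum_Ico_succ_top hb, ih]; ring

lemma sum_fin_ge (S : ℕ) (i : Fin S) (g : ℕ → ℝ) :
    (∑ p : Fin S, if i ≤ p then g (p : ℕ) else 0) = ∑ n ∈ Finset.Ico (i : ℕ) S, g n := by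
  have h2 : Finset.Ico (i : ℕ) S = (Finset.range S).filter (fun n => (i : ℕ) ≤ n) := by
    ext n; simp [Finset.mem_Ico, Finset.mem_filter]; omega
  rw [h2, Finset.sum_filter,
    ← Fin.sum_univ_eq_sum_range (fun n => if (i : ℕ) ≤ n then g n else 0) S]
  refine Finset.sum_congr rfl fun p _ => ?_
  show (if i ≤ p then g (p : ℕ) else 0) = if (i : ℕ) ≤ (p : ℕ) then g (p : ℕ) else 0
  by_cases h : (i : ℕ) ≤ (p : ℕ)
  · rw [if_pos h, if_pos (Fin.le_def.mpr h)]
  · rw [if_neg h, if_neg (fun hc => h (Fin.le_def.mp hc))]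

lemma rowsum (S : ℕ) (lam mu : ℕ → ℝ → ℝ) (d : ℕ → ℝ) (t : ℝ) (i q : Fin S) :
    (triD S d * szkB S lam mu t) i q
      = d ((i : ℕ) + 1) * ∑ n ∈ Finset.Ico (i : ℕ) S, szkF S lam mu t n (q : ℕ) := by
  rw [Matrix.mul_apply, Finset.mul_sum,
    ← sum_fin_ge S i (fun n => d ((i : ℕ) + 1) * szkF S lam mu t n (q : ℕ))]
  refine Finset.sum_congr rfl fun p _ => ?_
  by_cases h : i ≤ p
  · rw [if_pos h]; show (if i ≤ p then _ else 0) * _ = _; rw [if_pos h, szkB_eq]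
  · rw [if_neg h]; show (if i ≤ p then _ else 0) * _ = _; rw [if_neg h, zero_mul]

lemma col0 (S : ℕ) (d : ℕ → ℝ) (X : Fin S → ℝ) (j : Fin S) (hj : (j : ℕ) = 0) :
    (∑ q : Fin S, X q * dinvM S d q j) = X j * (d ((j : ℕ) + 1))⁻¹ := by
  have hstep : ∀ q : Fin S, X q * dinvM S d q j
      = if q = j then X q * (d ((j : ℕ) + 1))⁻¹ else 0 := by
    intro q
    by_cases h1 : q = j
    · subst h1; rw [dinvM_apply, if_pos rfl, if_pos rfl]
    · have h3 : ¬ ((q : ℕ) + 1 = (j : ℕ)) := by omega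
      rw [dinvM_apply, if_neg h1, if_neg h3, mul_zero, if_neg h1]
  rw [Finset.sum_congr rfl fun q _ => hstep q]
  simp

lemma colsucc (S : ℕ) (d : ℕ → ℝ) (X : Fin S → ℝ) (j : Fin S) (m : ℕ) (hmS : m < S)
    (hj : (j : ℕ) = m + 1) :
    (∑ q : Fin S, X q * dinvM S d q j)
      = (X j - X ⟨m, hmS⟩) * (d ((j : ℕ) + 1))⁻¹ := by
  set c := (d ((j : ℕ) + 1))⁻¹ with hc
  have hne : (⟨m, hmS⟩ : Fin S) ≠ j := by
    intro h; have := congrArg Fin.val h; simp at this; omega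
  have hstep : ∀ q : Fin S, X q * dinvM S d q j
      = (if q = j then X j * c else 0) + (if q = (⟨m, hmS⟩ : Fin S) then -(X q * c) else 0) := by
    intro q
    by_cases h1 : q = j
    · subst h1
      have h2 : q ≠ (⟨m, hmS⟩ : Fin S) := fun h => hne h.symm
      rw [dinvM_apply, if_pos rfl, if_pos rfl, if_neg h2, add_zero]
    · by_cases h2 : q = (⟨m, hmS⟩ : Fin S)
      · have h4 : (q : ℕ) + 1 = (j : ℕ) := by rw [h2, hj]
        rw [dinvM_apply, if_neg h1, if_pos h4, if_neg h1, if_pos h2, zero_add, h2]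
        ring
      · have h3 : ¬ ((q : ℕ) + 1 = (j : ℕ)) := by
          intro h; apply h2; apply Fin.ext; show (q : ℕ) = m; rw [hj] at h; omega
        rw [dinvM_apply, if_neg h1, if_neg h3, mul_zero, if_neg h1, if_neg h2, add_zero]
  rw [Finset.sum_congr rfl fun q _ => hstep q, Finset.sum_add_distrib]
  rw [Finset.sum_ite_eq' Finset.univ j (fun q => X j * c),
    Finset.sum_ite_eq' Finset.univ (⟨m, hmS⟩ : Fin S) (fun q => -(X q * c))]
  simp; ring

lemma triD_inv (S : ℕ) (d : ℕ → ℝ) (hd : ∀ k, 1 ≤ k → k ≤ S → d k ≠ 0) :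
    (triD S d)⁻¹ = dinvM S d := by
  apply Matrix.inv_eq_right_inv
  ext i j
  rw [Matrix.mul_apply]
  have hdj : d ((j : ℕ) + 1) ≠ 0 := hd _ (by omega) (by have := j.isLt; omega)
  by_cases hj0 : (j : ℕ) = 0
  · rw [col0 S d _ j hj0]
    by_cases hij : i = j
    · subst hij
      have h5 : triD S d i i = d ((i : ℕ) + 1) := by
        rw [triD_apply, if_pos (le_refl i)]
      rw [h5, Matrix.one_apply_eq, mul_inv_cancel₀ hdj]
    · have h1 : ¬ (i ≤ j) := by
        intro h; apply hij; apply Fin.ext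
        have := Fin.le_def.mp h; omega
      have h5 : triD S d i j = 0 := by rw [triD_apply, if_neg h1]
      rw [h5, Matrix.one_apply_ne hij, zero_mul]
  · obtain ⟨m, hm⟩ : ∃ m, (j : ℕ) = m + 1 := ⟨(j : ℕ) - 1, by omega⟩
    have hmS : m < S := by have := j.isLt; omega
    rw [colsucc S d _ j m hmS hm]
    rcases lt_trichotomy ((i : ℕ)) ((j : ℕ)) with h | h | h
    · have h1 : triD S d i j = d ((i : ℕ) + 1) := by
        rw [triD_apply, if_pos (Fin.le_def.mpr (le_of_lt h))]
      have h2 : triD S d i (⟨m, hmS⟩ : Fin S) = d ((i : ℕ) + 1) := by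
        rw [triD_apply, if_pos (Fin.le_def.mpr (by simp; omega))]
      have hij : i ≠ j := fun hh => by subst hh; omega
      rw [h1, h2, Matrix.one_apply_ne hij, sub_self, zero_mul]
    · have hij : i = j := Fin.ext h
      subst hij
      have h1 : triD S d i i = d ((i : ℕ) + 1) := by
        rw [triD_apply, if_pos (le_refl i)]
      have h2 : triD S d i (⟨m, hmS⟩ : Fin S) = 0 := by
        rw [triD_apply, if_neg (fun hc => by have := Fin.le_def.mp hc; simp at this; omega)]
      rw [h1, h2, Matrix.one_apply_eq, sub_zero, mul_inv_cancel₀ hdj]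
    · have h1 : triD S d i j = 0 := by
        rw [triD_apply, if_neg (fun hc => by have := Fin.le_def.mp hc; omega)]
      have h2 : triD S d i (⟨m, hmS⟩ : Fin S) = 0 := by
        rw [triD_apply, if_neg (fun hc => by have := Fin.le_def.mp hc; simp at this; omega)]
      have hij : i ≠ j := fun hh => by subst hh; omega
      rw [h1, h2, Matrix.one_apply_ne hij, sub_self, zero_mul]

lemma Hentry_zero (S : ℕ) (lam mu : ℕ → ℝ → ℝ) (d : ℕ → ℝ) (t : ℝ) (i j : Fin S)
    (hj : (j : ℕ) = 0) :
    (triD S d * szkB S lam mu t * dinvM S d) i j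
      = d ((i : ℕ) + 1) * (d ((j : ℕ) + 1))⁻¹ *
          (∑ n ∈ Finset.Ico (i : ℕ) S, szkF S lam mu t n (j : ℕ)) := by
  rw [Matrix.mul_apply, col0 S d _ j hj, rowsum]
  ring

lemma Hentry_succ (S : ℕ) (lam mu : ℕ → ℝ → ℝ) (d : ℕ → ℝ) (t : ℝ) (i j : Fin S)
    (m : ℕ) (hmS : m < S) (hj : (j : ℕ) = m + 1) :
    (triD S d * szkB S lam mu t * dinvM S d) i j
      = d ((i : ℕ) + 1) * (d ((j : ℕ) + 1))⁻¹ *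
          ((∑ n ∈ Finset.Ico (i : ℕ) S, szkF S lam mu t n (j : ℕ))
            - ∑ n ∈ Finset.Ico (i : ℕ) S, szkF S lam mu t n m) := by
  rw [Matrix.mul_apply, colsucc S d _ j m hmS hj, rowsum, rowsum]
  simp only [Fin.val_mk]
  ring

lemma entry_lower (S : ℕ) (lam mu : ℕ → ℝ → ℝ) (d : ℕ → ℝ) (t : ℝ) (i j : Fin S)
    (hji : (j : ℕ) < (i : ℕ)) :
    (triD S d * szkB S lam mu t * dinvM S d) i j
      = d ((i : ℕ) + 1) / d ((j : ℕ) + 1) *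
          (lam ((i : ℕ) - (j : ℕ)) t - lam (S - (j : ℕ)) t) := by
  rw [div_eq_mul_inv]
  by_cases hj0 : (j : ℕ) = 0
  · rw [Hentry_zero S lam mu d t i j hj0]
    have h1 : ∀ n ∈ Finset.Ico (i : ℕ) S,
        szkF S lam mu t n (j : ℕ)
          = (fun n => lam (n - (j : ℕ)) t) n - (fun n => lam (n - (j : ℕ)) t) (n + 1) := by
      intro n hn
      simp only [Finset.mem_Ico] at hn
      rw [szkF_lt S lam mu t (by omega)]
      simp only
      congr 2
      omega
    rw [Finset.sum_congr rfl h1, telescope _ (le_of_lt i.isLt)]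
  · obtain ⟨m, hm⟩ : ∃ m, (j : ℕ) = m + 1 := ⟨(j : ℕ) - 1, by omega⟩
    have hmS : m < S := by have := j.isLt; omega
    rw [Hentry_succ S lam mu d t i j m hmS hm, ← Finset.sum_sub_distrib]
    have h1 : ∀ n ∈ Finset.Ico (i : ℕ) S,
        szkF S lam mu t n (j : ℕ) - szkF S lam mu t n m
          = (fun n => lam (n - (j : ℕ)) t) n - (fun n => lam (n - (j : ℕ)) t) (n + 1) := by
      intro n hn
      simp only [Finset.mem_Ico] at hn
      rw [szkF_lt S lam mu t (by omega), szkF_lt S lam mu t (by omega)]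
      simp only
      have e1 : n - m = n + 1 - (j : ℕ) := by omega
      rw [e1]
      ring
    rw [Finset.sum_congr rfl h1, telescope _ (le_of_lt i.isLt)]

lemma entry_diag (S : ℕ) (lam mu : ℕ → ℝ → ℝ) (d : ℕ → ℝ) (t : ℝ)
    (hd : ∀ k, 1 ≤ k → k ≤ S → d k ≠ 0) (i : Fin S) :
    (triD S d * szkB S lam mu t * dinvM S d) i i =
      -((∑ k ∈ Finset.Icc 1 ((i : ℕ) + 1), mu k t) +
          ∑ k ∈ Finset.Icc 1 (S - ((i : ℕ) + 1)), lam k t) - lam (S - (i : ℕ)) t := by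
  have hdi : d ((i : ℕ) + 1) ≠ 0 := hd _ (by omega) (by have := i.isLt; omega)
  have hcancel : d ((i : ℕ) + 1) * (d ((i : ℕ) + 1))⁻¹ = 1 := mul_inv_cancel₀ hdi
  by_cases hi0 : (i : ℕ) = 0
  · rw [Hentry_zero S lam mu d t i i hi0,
      Finset.sum_eq_sum_Ico_succ_bot i.isLt, szkF_diag]
    have h1 : ∀ n ∈ Finset.Ico ((i : ℕ) + 1) S,
        szkF S lam mu t n (i : ℕ)
          = (fun n => lam (n - (i : ℕ)) t) n - (fun n => lam (n - (i : ℕ)) t) (n + 1) := by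
      intro n hn
      simp only [Finset.mem_Ico] at hn
      rw [szkF_lt S lam mu t (by omega)]
      simp only
      congr 2
      omega
    rw [Finset.sum_congr rfl h1, telescope _ i.isLt,
      show ((i : ℕ) + 1 - (i : ℕ)) = (i : ℕ) + 1 from by omega]
    linear_combination
      (-((∑ k ∈ Finset.Icc 1 ((i : ℕ) + 1), mu k t) +
          ∑ k ∈ Finset.Icc 1 (S - ((i : ℕ) + 1)), lam k t) - lam (S - (i : ℕ)) t) * hcancel
  · obtain ⟨m, hm⟩ : ∃ m, (i : ℕ) = m + 1 := ⟨(i : ℕ) - 1, by omega⟩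
    have hmS : m < S := by have := i.isLt; omega
    rw [Hentry_succ S lam mu d t i i m hmS hm, ← Finset.sum_sub_distrib,
      Finset.sum_eq_sum_Ico_succ_bot i.isLt, szkF_diag,
      szkF_lt S lam mu t (show m < (i : ℕ) by omega),
      show ((i : ℕ) - m) = 1 from by omega]
    have h1 : ∀ n ∈ Finset.Ico ((i : ℕ) + 1) S,
        szkF S lam mu t n (i : ℕ) - szkF S lam mu t n m
          = (fun n => lam (n - (i : ℕ)) t) n - (fun n => lam (n - (i : ℕ)) t) (n + 1) := by
      intro n hn
      simp only [Finset.mem_Ico] at hn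
      rw [szkF_lt S lam mu t (by omega), szkF_lt S lam mu t (by omega)]
      simp only
      have e1 : n - m = n + 1 - (i : ℕ) := by omega
      rw [e1]; ring
    rw [Finset.sum_congr rfl h1, telescope _ i.isLt,
      show ((i : ℕ) + 1 - (i : ℕ)) = 1 from by omega]
    linear_combination
      (-((∑ k ∈ Finset.Icc 1 ((i : ℕ) + 1), mu k t) +
          ∑ k ∈ Finset.Icc 1 (S - ((i : ℕ) + 1)), lam k t) - lam (S - (i : ℕ)) t) * hcancel

lemma entry_upper (S : ℕ) (lam mu : ℕ → ℝ → ℝ) (d : ℕ → ℝ) (t : ℝ) (i j : Fin S)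
    (hij : (i : ℕ) < (j : ℕ)) :
    (triD S d * szkB S lam mu t * dinvM S d) i j
      = d ((i : ℕ) + 1) / d ((j : ℕ) + 1) *
          (mu ((j : ℕ) - (i : ℕ)) t - mu ((j : ℕ) + 1) t) := by
  rw [div_eq_mul_inv]
  obtain ⟨m, hm⟩ : ∃ m, (j : ℕ) = m + 1 := ⟨(j : ℕ) - 1, by omega⟩
  have hmS : m < S := by have := j.isLt; omega
  have hjS : m + 1 < S := by have := j.isLt; omega
  rw [Hentry_succ S lam mu d t i j m hmS hm, ← Finset.sum_sub_distrib, hm]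
  rw [← Finset.sum_Ico_consecutive _ (show (i : ℕ) ≤ m by omega) (show m ≤ S by omega),
    Finset.sum_eq_sum_Ico_succ_bot hmS, Finset.sum_eq_sum_Ico_succ_bot hjS]
  have h1 : ∀ n ∈ Finset.Ico (i : ℕ) m,
      szkF S lam mu t n (m + 1) - szkF S lam mu t n m
        = (fun n => mu (m + 1 - n) t) n - (fun n => mu (m + 1 - n) t) (n + 1) := by
    intro n hn
    simp only [Finset.mem_Ico] at hn
    rw [szkF_gt S lam mu t (by omega), szkF_gt S lam mu t (by omega)]
    simp only
    have e1 : m - n = m + 1 - (n + 1) := by omega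
    rw [e1]; ring
  have h4 : ∀ n ∈ Finset.Ico (m + 1 + 1) S,
      szkF S lam mu t n (m + 1) - szkF S lam mu t n m
        = (fun n => lam (n - (m + 1)) t) n - (fun n => lam (n - (m + 1)) t) (n + 1) := by
    intro n hn
    simp only [Finset.mem_Ico] at hn
    rw [szkF_lt S lam mu t (by omega), szkF_lt S lam mu t (by omega)]
    simp only
    have e1 : n - m = n + 1 - (m + 1) := by omega
    rw [e1]; ring
  rw [Finset.sum_congr rfl h1, telescope _ (show (i : ℕ) ≤ m by omega),
    Finset.sum_congr rfl h4, telescope _ (show m + 1 + 1 ≤ S by omega),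
    szkF_gt S lam mu t (show m < m + 1 by omega),
    szkF_diag S lam mu t m, szkF_diag S lam mu t (m + 1),
    szkF_lt S lam mu t (show m < m + 1 by omega),
    show (m + 1 - m) = 1 from by omega,
    show (m + 1 + 1 - (m + 1)) = 1 from by omega]
  have h5 : (∑ k ∈ Finset.Icc 1 (m + 1 + 1), mu k t)
      = (∑ k ∈ Finset.Icc 1 (m + 1), mu k t) + mu (m + 1 + 1) t :=
    Finset.sum_Icc_succ_top (by omega) _
  have h6 : (∑ k ∈ Finset.Icc 1 (S - (m + 1)), lam k t)
      = (∑ k ∈ Finset.Icc 1 (S - (m + 1 + 1)), lam k t) + lam (S - (m + 1)) t := by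
    have e : S - (m + 1) = (S - (m + 1 + 1)) + 1 := by omega
    rw [e, Finset.sum_Icc_succ_top (by omega), ← e]
  linear_combination (d ((i : ℕ) + 1) * (d (m + 1 + 1))⁻¹) * h6
    - (d ((i : ℕ) + 1) * (d (m + 1 + 1))⁻¹) * h5

lemma rate_mono (S : ℕ) (f : ℕ → ℝ) (h : ∀ k, 1 ≤ k → k ≤ S - 1 → f (k + 1) ≤ f k)
    {a b : ℕ} (ha : 1 ≤ a) (hab : a ≤ b) (hb : b ≤ S) : f b ≤ f a := by
  induction b, hab using Nat.le_induction with
  | base => exact le_refl _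
  | succ b hb' ih => exact le_trans (h b (by omega) (by omega)) (ih (by omega))

/-- Explicit form of `H(t) = D B(t) D⁻¹` for the SZK model:
`H_{ii} = A_{ii} − λ_{S−i+1}`, `H_{ij} = (d_i/d_j)(μ_{j−i} − μ_j)` for `i < j`,
`H_{ij} = (d_i/d_j)(λ_{i−j} − λ_{S−j+1})` for `i > j`; in particular, if the
rates are nonincreasing in `k` then `H(t)` is essentially nonnegative. -/
theorem szk_transformed_matrix_entries
    (S : ℕ) (hS : 1 ≤ S)
    (lam mu : ℕ → ℝ → ℝ) (d : ℕ → ℝ)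
    (hlam : ∀ k, 1 ≤ k → k ≤ S →
      ContinuousOn (lam k) (Ici 0) ∧ ∀ t ∈ Ici (0 : ℝ), 0 ≤ lam k t)
    (hmu : ∀ k, 1 ≤ k → k ≤ S →
      ContinuousOn (mu k) (Ici 0) ∧ ∀ t ∈ Ici (0 : ℝ), 0 ≤ mu k t)
    (hd : ∀ k, 1 ≤ k → k ≤ S → 0 < d k)
    (H : ℝ → Matrix (Fin S) (Fin S) ℝ)
    (hH : ∀ t, H t = triD S d * szkB S lam mu t * (triD S d)⁻¹) :
    (∀ t ∈ Ici (0 : ℝ),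
      (∀ i : Fin S, H t i i =
        -((∑ k ∈ Finset.Icc 1 ((i : ℕ) + 1), mu k t) +
            ∑ k ∈ Finset.Icc 1 (S - ((i : ℕ) + 1)), lam k t)
          - lam (S - (i : ℕ)) t) ∧
      (∀ i j : Fin S, i < j → H t i j =
        d ((i : ℕ) + 1) / d ((j : ℕ) + 1) * (mu ((j : ℕ) - (i : ℕ)) t - mu ((j : ℕ) + 1) t)) ∧
      (∀ i j : Fin S, j < i → H t i j =
        d ((i : ℕ) + 1) / d ((j : ℕ) + 1) * (lam ((i : ℕ) - (j : ℕ)) t - lam (S - (j : ℕ)) t))) ∧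
    ((∀ k, 1 ≤ k → k ≤ S - 1 → ∀ t ∈ Ici (0 : ℝ),
        lam (k + 1) t ≤ lam k t ∧ mu (k + 1) t ≤ mu k t) →
      ∀ t ∈ Ici (0 : ℝ), ∀ i j : Fin S, i ≠ j → 0 ≤ H t i j) := by
  have hd' : ∀ k, 1 ≤ k → k ≤ S → d k ≠ 0 := fun k h1 h2 => (hd k h1 h2).ne'
  have hHt : ∀ t, H t = triD S d * szkB S lam mu t * dinvM S d := by
    intro t; rw [hH t, triD_inv S d hd']
  constructor
  · intro t _
    refine ⟨fun i => ?_, fun i j hij => ?_, fun i j hji => ?_⟩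
    · rw [hHt t]; exact entry_diag S lam mu d t hd' i
    · rw [hHt t]; exact entry_upper S lam mu d t i j hij
    · rw [hHt t]; exact entry_lower S lam mu d t i j hji
  · intro hmono t ht i j hij
    have hdr : 0 ≤ d ((i : ℕ) + 1) / d ((j : ℕ) + 1) :=
      le_of_lt (div_pos (hd _ (by omega) (by have := i.isLt; omega))
        (hd _ (by omega) (by have := j.isLt; omega)))
    rcases lt_or_gt_of_ne hij with h | h
    · have hlt : (i : ℕ) < (j : ℕ) := h
      rw [hHt t, entry_upper S lam mu d t i j hlt]
      refine mul_nonneg hdr (sub_nonneg.mpr ?_)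
      exact rate_mono S (fun k => mu k t)
        (fun k h1 h2 => (hmono k h1 h2 t ht).2)
        (by omega) (by omega) (by have := j.isLt; omega)
    · have hlt : (j : ℕ) < (i : ℕ) := h
      rw [hHt t, entry_lower S lam mu d t i j hlt]
      refine mul_nonneg hdr (sub_nonneg.mpr ?_)
      exact rate_mono S (fun k => lam k t)
        (fun k h1 h2 => (hmono k h1 h2 t ht).1)
        (by omega) (by omega) (by omega)
end
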